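/- arXiv:2004.10422 — 10 statements merged into one kernel-verified Lean document; each statement's English description precedes it below -/
import Mathlib

section
/- Let J ⊆ I be monomial ideals in R = K[x_1,...,x_n] over a field K. If there exists t ≥ 1 with J ∩ I^t ≠ J·I^{t-1}, then the least such t satisfies indeg(VV_{J⊆I}) ≤ min{ t_0(J), AR(J,I) }. -/
/-!
The Artin–Rees bound holds in any Noetherian ring: if `J ∩ I^t = J·I^{t-1}` at `t = AR(J,I)`
(or `AR(J,I) = 0`), the Artin–Rees equality propagates this to every larger `t`.

The bound by `t₀(J)` is monomial combinatorics. Let `x^α ∈ J ∩ I^t` with `t > t₀(J)`, so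
`x^γ ∣ x^α` for a generator `γ` of `J` and `x^α` is divisible by a product `x^{β₁} ⋯ x^{β_t}` of
generators of `I`. As `deg γ < t`, one factor `x^β` can be split off with `x^γ x^β ∣ x^α`
(otherwise shrinking `γ` by one factor at a time would exhaust its degree before the factors run
out). Then `x^{α-β} ∈ J ∩ I^{t-1}`, and if this equals `J·I^{t-2}` we get `x^α ∈ J·I^{t-1}`.
-/

open MvPolynomial Pointwise

namespace Ideal

variable {R : Type*} [CommSemiring R] {I J : Ideal R}

theorem mul_pow_pred_le_inf_pow (hJI : J ≤ I) {t : ℕ} (ht : 1 ≤ t) :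
    J * I ^ (t - 1) ≤ J ⊓ I ^ t := by
  refine le_inf mul_le_left ?_
  calc J * I ^ (t - 1) ≤ I * I ^ (t - 1) := mul_mono_left hJI
    _ = I ^ t := by rw [← pow_succ', Nat.sub_add_cancel ht]

theorem inf_pow_eq_mul_pow_pred_of_artinRees (hJI : J ≤ I) {k : ℕ}
    (hk : ∀ t ≥ k, J ⊓ I ^ t = (J ⊓ I ^ k) * I ^ (t - k))
    (hk_one : 1 ≤ k → J ⊓ I ^ k = J * I ^ (k - 1)) {t : ℕ} (hkt : k ≤ t) (ht : 1 ≤ t) :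
    J ⊓ I ^ t = J * I ^ (t - 1) := by
  rcases Nat.eq_zero_or_pos k with rfl | hk_pos
  · refine le_antisymm ?_ (mul_pow_pred_le_inf_pow hJI ht)
    rw [hk t hkt, pow_zero, one_eq_top, inf_top_eq, Nat.sub_zero]
    exact mul_mono_right (pow_le_pow_right (Nat.sub_le t 1))
  · rw [hk t hkt, hk_one hk_pos, mul_assoc, ← pow_add, show k - 1 + (t - k) = t - 1 by omega]

end Ideal

theorem Ideal.exists_artinRees {R : Type*} [CommRing R] [IsNoetherianRing R] (I J : Ideal R) :
    ∃ k, ∀ t ≥ k, J ⊓ I ^ t = (J ⊓ I ^ k) * I ^ (t - k) := by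
  obtain ⟨k, hk⟩ := Ideal.exists_pow_inf_eq_pow_smul I (J : Submodule R R)
  refine ⟨k, fun t ht => ?_⟩
  simpa only [smul_eq_mul, mul_top, inf_comm, mul_comm] using hk t ht

theorem Finsupp.degree_lt_degree {σ : Type*} {f g : σ →₀ ℕ} (h : f < g) :
    f.degree < g.degree := by
  have hsplit : g.degree = f.degree + (g - f).degree := by
    rw [← map_add, add_tsub_cancel_of_le h.le]
  have hpos : (g - f).degree ≠ 0 := by
    rw [Ne, degree_eq_zero_iff, tsub_eq_zero_iff_le]
    exact h.not_ge
  omega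

theorem Finsupp.exists_mem_add_le_of_mem_nsmul {σ : Type*} {S : Set (σ →₀ ℕ)} {t : ℕ}
    {γ α q : σ →₀ ℕ} (hq : q ∈ t • S) (hγα : γ ≤ α) (hqα : q ≤ α) (hγ : γ.degree < t) :
    ∃ β ∈ S, ∃ r ∈ (t - 1) • S, β + r = q ∧ γ + β ≤ α := by
  induction t generalizing γ α q with
  | zero => exact absurd hγ (Nat.not_lt_zero _)
  | succ t ih =>
    obtain ⟨β₀, hβ₀, r₀, hr₀, rfl⟩ := Set.mem_add.mp (succ_nsmul' S t ▸ hq)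
    by_cases hfits : γ + β₀ ≤ α
    · exact ⟨β₀, hβ₀, r₀, hr₀, rfl, hfits⟩
    have hβ₀α : β₀ ≤ α := le_self_add.trans hqα
    have hshrink : γ ⊓ (α - β₀) < γ := inf_lt_left.mpr (by rwa [le_tsub_iff_right hβ₀α])
    have hdeg := (Finsupp.degree_lt_degree hshrink).trans_le (Nat.lt_succ_iff.mp hγ)
    obtain ⟨β, hβ, r, hr, rfl, hle⟩ := ih hr₀ inf_le_right (le_tsub_of_add_le_left hqα) hdeg
    rcases t with _ | t
    · exact absurd hdeg (Nat.not_lt_zero _)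
    refine ⟨β, hβ, β₀ + r, ?_, add_left_comm _ _ _, fun x => ?_⟩
    · rw [Nat.add_sub_cancel, succ_nsmul']
      exact Set.add_mem_add hβ₀ hr
    · have h₁ := hle x
      have h₂ := hγα x
      have h₃ := hqα x
      simp only [Finsupp.coe_add, Pi.add_apply, Finsupp.inf_apply, Finsupp.coe_tsub,
        Pi.sub_apply] at h₁ h₂ h₃ ⊢
      omega

namespace MvPolynomial

variable {σ R : Type*} [CommSemiring R]

theorem image_monomial_one_add (A B : Set (σ →₀ ℕ)) :
    (fun a => monomial a (1 : R)) '' (A + B) =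
      (fun a => monomial a (1 : R)) '' A * (fun a => monomial a (1 : R)) '' B := by
  rw [← Set.image2_add, ← Set.image2_mul]
  exact Set.image_image2_distrib fun a b => by rw [monomial_mul, one_mul]

theorem span_monomial_one_mul (A B : Set (σ →₀ ℕ)) :
    Ideal.span ((fun a => monomial a (1 : R)) '' A) *
        Ideal.span ((fun a => monomial a (1 : R)) '' B) =
      Ideal.span ((fun a => monomial a (1 : R)) '' (A + B)) := by
  rw [Ideal.span_mul_span', image_monomial_one_add]

theorem span_monomial_one_pow (S : Set (σ →₀ ℕ)) (t : ℕ) :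
    Ideal.span ((fun a => monomial a (1 : R)) '' S) ^ t =
      Ideal.span ((fun a => monomial a (1 : R)) '' (t • S)) := by
  induction t with
  | zero => simp [Ideal.one_eq_top]
  | succ t ih => rw [pow_succ', ih, span_monomial_one_mul, succ_nsmul']

theorem monomial_one_mem_span_monomial_one_iff [Nontrivial R] {a : σ →₀ ℕ}
    {s : Set (σ →₀ ℕ)} :
    monomial a (1 : R) ∈ Ideal.span ((fun b => monomial b (1 : R)) '' s) ↔ ∃ b ∈ s, b ≤ a := by
  classical
  rw [mem_ideal_span_monomial_image, support_monomial, if_neg one_ne_zero]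
  simp

theorem span_monomial_one_inf_pow_le_mul_pow_pred_of_degree_lt [Nontrivial R]
    {G S : Set (σ →₀ ℕ)} {t : ℕ}
    (ht : 2 ≤ t) (hG : ∀ γ ∈ G, γ.degree < t)
    (hprev : Ideal.span ((fun a => monomial a (1 : R)) '' G) ⊓
        Ideal.span ((fun a => monomial a (1 : R)) '' S) ^ (t - 1) =
      Ideal.span ((fun a => monomial a (1 : R)) '' G) *
        Ideal.span ((fun a => monomial a (1 : R)) '' S) ^ (t - 2)) :
    Ideal.span ((fun a => monomial a (1 : R)) '' G) ⊓
        Ideal.span ((fun a => monomial a (1 : R)) '' S) ^ t ≤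
      Ideal.span ((fun a => monomial a (1 : R)) '' G) *
        Ideal.span ((fun a => monomial a (1 : R)) '' S) ^ (t - 1) := by
  simp only [span_monomial_one_pow, span_monomial_one_mul] at hprev ⊢
  intro p hp
  obtain ⟨hpG, hpS⟩ := Submodule.mem_inf.mp hp
  rw [mem_ideal_span_monomial_image] at hpG hpS ⊢
  intro α hα
  obtain ⟨γ, hγ, hγα⟩ := hpG α hα
  obtain ⟨q, hq, hqα⟩ := hpS α hα
  obtain ⟨β, hβ, r, hr, rfl, hγβ⟩ := Finsupp.exists_mem_add_le_of_mem_nsmul hq hγα hqα (hG γ hγ)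
  have hβα : β ≤ α := le_self_add.trans hqα
  have hquot : monomial (α - β) (1 : R) ∈ Ideal.span ((fun a => monomial a (1 : R)) '' G) ⊓
      Ideal.span ((fun a => monomial a (1 : R)) '' ((t - 1) • S)) :=
    ⟨monomial_one_mem_span_monomial_one_iff.mpr ⟨γ, hγ, le_tsub_of_add_le_right hγβ⟩,
      monomial_one_mem_span_monomial_one_iff.mpr ⟨r, hr, le_tsub_of_add_le_left hqα⟩⟩
  rw [hprev, monomial_one_mem_span_monomial_one_iff] at hquot
  obtain ⟨_, ⟨γ', hγ', r', hr', rfl⟩, hle⟩ := hquot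
  refine ⟨γ' + (β + r'), Set.add_mem_add hγ' ?_, ?_⟩
  · rw [show t - 1 = t - 2 + 1 by omega, succ_nsmul']
    exact Set.add_mem_add hβ hr'
  · rw [add_left_comm]
    exact (le_tsub_iff_left hβα).mp hle

end MvPolynomial

theorem indeg_VV_le_min_t0_AR_general {K : Type} [Field K] {n : ℕ}
    (J I : Ideal (MvPolynomial (Fin n) K))
    (S : Set (Fin n →₀ ℕ))
    (hI : I = Ideal.span ((fun a => MvPolynomial.monomial a (1 : K)) '' S))
    (G : Finset (Fin n →₀ ℕ))
    (hJ : J = Ideal.span ((fun a => MvPolynomial.monomial a (1 : K)) '' ↑G))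
    (hJI : J ≤ I)
    (hne : ∃ t : ℕ, 1 ≤ t ∧ J ⊓ I ^ t ≠ J * I ^ (t - 1)) :
    sInf {t : ℕ | 1 ≤ t ∧ J ⊓ I ^ t ≠ J * I ^ (t - 1)} ≤
      min (G.sup fun a => a.sum fun _ e => e)
        (sInf {k : ℕ | ∀ t ≥ k, J ⊓ I ^ t = (J ⊓ I ^ k) * I ^ (t - k)}) := by
  set T := sInf {t : ℕ | 1 ≤ t ∧ J ⊓ I ^ t ≠ J * I ^ (t - 1)}
  obtain ⟨hT_pos, hT⟩ : 1 ≤ T ∧ J ⊓ I ^ T ≠ J * I ^ (T - 1) := Nat.sInf_mem hne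
  have hbelow : ∀ s, 1 ≤ s → s < T → J ⊓ I ^ s = J * I ^ (s - 1) := fun s hs hsT => by
    simpa [hs] using Nat.notMem_of_lt_sInf hsT
  have hT_two : 2 ≤ T := by
    by_contra! h
    apply hT
    rw [show T = 1 by omega, pow_one, Nat.sub_self, pow_zero, mul_one, inf_eq_left.mpr hJI]
  refine le_min (not_lt.mp fun ht₀ => hT ?_) (not_lt.mp fun hAR => hT ?_)
  · refine le_antisymm ?_ (Ideal.mul_pow_pred_le_inf_pow hJI hT_pos)
    have hprev := hbelow (T - 1) (by omega) (by omega)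
    rw [show T - 1 - 1 = T - 2 by omega] at hprev
    subst hI hJ
    exact span_monomial_one_inf_pow_le_mul_pow_pred_of_degree_lt hT_two
      (fun γ hγ => (Finset.le_sup (f := Finsupp.degree) hγ).trans_lt ht₀) hprev
  · exact Ideal.inf_pow_eq_mul_pow_pred_of_artinRees hJI
      (Nat.sInf_mem (Ideal.exists_artinRees I J)) (fun h => hbelow _ h hAR) hAR.le hT_pos

/-- Let `J ⊆ I` be monomial ideals in `K[x_1,…,x_n]`.  Here `G` is the
(unique) minimal monomial generating set of `J` (minimality is expressed by saying that no
member of `G` lies in the ideal spanned by the other members), and `I` is a monomial ideal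
containing `J`.  If the Valabrega–Valla module is nonzero, i.e. there is `t ≥ 1` with
`J ∩ I^t ≠ J·I^{t-1}`, then its initial degree (the least such `t`) is at most
`min (t₀(J)) (AR(J,I))`, where `t₀(J)` is the maximal total degree of a minimal generator
of `J` and `AR(J,I)` is the Artin–Rees number. -/
theorem indeg_VV_le_min_t0_AR {K : Type} [Field K] {n : ℕ}
    (J I : Ideal (MvPolynomial (Fin n) K))
    (S : Set (Fin n →₀ ℕ))
    (hI : I = Ideal.span ((fun a => MvPolynomial.monomial a (1 : K)) '' S))
    (G : Finset (Fin n →₀ ℕ))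
    (hJ : J = Ideal.span ((fun a => MvPolynomial.monomial a (1 : K)) '' ↑G))
    (hmin : ∀ a ∈ G, MvPolynomial.monomial a (1 : K) ∉
      Ideal.span ((fun b => MvPolynomial.monomial b (1 : K)) '' ↑(G.erase a)))
    (hJI : J ≤ I)
    (hne : ∃ t : ℕ, 1 ≤ t ∧ J ⊓ I ^ t ≠ J * I ^ (t - 1)) :
    sInf {t : ℕ | 1 ≤ t ∧ J ⊓ I ^ t ≠ J * I ^ (t - 1)} ≤
      min (G.sup fun a => a.sum fun _ e => e)
        (sInf {k : ℕ | ∀ t ≥ k, J ⊓ I ^ t = (J ⊓ I ^ k) * I ^ (t - k)}) :=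
  indeg_VV_le_min_t0_AR_general J I S hI G hJ hJI hne
end

section
/- Let K be a field, R = K[x_1,...,x_n], m = (x_1,...,x_n), r ≥ 1 an integer, and J a nonzero homogeneous ideal of R with J ⊆ m^r. If J ∩ (m^r)^t = J·(m^r)^{t-1} for all t ≥ 1, then the least degree of a nonzero homogeneous element of J equals r. -/
/-!
Let `d` be the initial degree of `J` and `f ∈ J` nonzero homogeneous of degree `d`. Since `J ⊆ m^r`,
`r ≤ d`. Conversely `f^r ∈ J` is homogeneous of degree `rd`, hence lies in `(m^r)^d`, so the
vanishing of `VV` at `t = d` puts it in `J·(m^r)^(d-1) ⊆ m^(d + r(d-1))`. Comparing degrees,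
`d + r(d-1) ≤ rd`, that is `d ≤ r`.
-/

namespace MvPolynomial

variable {σ R : Type*} [CommSemiring R]

theorem IsHomogeneous.degree_eq_of_mem_support {f : MvPolynomial σ R} {d : ℕ}
    (hf : f.IsHomogeneous d) {x : σ →₀ ℕ} (hx : x ∈ f.support) : x.degree = d := by
  by_contra h
  exact mem_support_iff.mp hx (hf.coeff_eq_zero h)

theorem IsHomogeneous.mem_pow_idealOfVars {f : MvPolynomial σ R} {d : ℕ}
    (hf : f.IsHomogeneous d) : f ∈ idealOfVars σ R ^ d :=
  (mem_pow_idealOfVars_iff d f).mpr fun _ hx => (hf.degree_eq_of_mem_support hx).ge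

theorem IsHomogeneous.le_of_mem_pow_idealOfVars {f : MvPolynomial σ R} {d k : ℕ}
    (hf : f.IsHomogeneous d) (hf0 : f ≠ 0) (hk : f ∈ idealOfVars σ R ^ k) : k ≤ d := by
  obtain ⟨x, hx⟩ := support_nonempty.mpr hf0
  exact hf.degree_eq_of_mem_support hx ▸ (mem_pow_idealOfVars_iff k f).mp hk x hx

/-- `0` when `J` has no nonzero homogeneous element. -/
noncomputable def indeg (J : Ideal (MvPolynomial σ R)) : ℕ :=
  sInf {d : ℕ | ∃ f ∈ J, f ≠ 0 ∧ f.IsHomogeneous d}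

variable {J : Ideal (MvPolynomial σ R)}

theorem exists_isHomogeneous_indeg (hhom : ∀ f ∈ J, ∀ d : ℕ, homogeneousComponent d f ∈ J)
    (hJ : J ≠ ⊥) : ∃ f ∈ J, f ≠ 0 ∧ f.IsHomogeneous (indeg J) := by
  obtain ⟨p, hpJ, hp0⟩ := Submodule.exists_mem_ne_zero_of_ne_bot hJ
  obtain ⟨d, hd⟩ : ∃ d, homogeneousComponent d p ≠ 0 := by
    by_contra! h
    exact hp0 (by rw [← sum_homogeneousComponent p]; exact Finset.sum_eq_zero fun d _ => h d)
  exact Nat.sInf_mem (s := {d : ℕ | ∃ f ∈ J, f ≠ 0 ∧ f.IsHomogeneous d})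
    ⟨d, _, hhom p hpJ d, hd, homogeneousComponent_isHomogeneous d p⟩

theorem le_pow_idealOfVars_indeg (hhom : ∀ f ∈ J, ∀ d : ℕ, homogeneousComponent d f ∈ J) :
    J ≤ idealOfVars σ R ^ indeg J := by
  intro q hq
  refine (mem_pow_idealOfVars_iff _ q).mpr fun x hx => Nat.sInf_le ⟨_, hhom q hq x.degree, ?_,
    homogeneousComponent_isHomogeneous _ q⟩
  rw [← support_nonempty, support_homogeneousComponent]
  exact ⟨x, Finset.mem_filter.mpr ⟨hx, rfl⟩⟩

end MvPolynomial

open MvPolynomial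

/-- Let `J ⊆ m^r` be a nonzero homogeneous ideal of `K[x_1,…,x_n]`
(`m = (x_1,…,x_n)`, `r ≥ 1`).  If `J ∩ (m^r)^t = J·(m^r)^{t-1}` for all `t ≥ 1`
(vanishing of the Valabrega–Valla module `VV_{J ⊆ m^r}`), then the least degree of a
nonzero homogeneous element of `J` equals `r`. -/
theorem indeg_eq_r_of_VV_vanishes {K : Type} [Field K] {n : ℕ} (r : ℕ) (hr : 1 ≤ r)
    (J : Ideal (MvPolynomial (Fin n) K))
    (hhom : ∀ f ∈ J, ∀ d : ℕ, MvPolynomial.homogeneousComponent d f ∈ J)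
    (hJne : J ≠ ⊥)
    (m : Ideal (MvPolynomial (Fin n) K))
    (hm : m = Ideal.span (Set.range MvPolynomial.X))
    (hJm : J ≤ m ^ r)
    (hVV : ∀ t : ℕ, 1 ≤ t → J ⊓ (m ^ r) ^ t = J * (m ^ r) ^ (t - 1)) :
    sInf {d : ℕ | ∃ f ∈ J, f ≠ 0 ∧ MvPolynomial.IsHomogeneous f d} = r := by
  change indeg J = r
  subst hm
  obtain ⟨f, hfJ, hf0, hf⟩ := exists_isHomogeneous_indeg hhom hJne
  set d := indeg J
  have hrd : r ≤ d := hf.le_of_mem_pow_idealOfVars hf0 (hJm hfJ)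
  have hfr : f ^ r ∈ J ⊓ (idealOfVars (Fin n) K ^ r) ^ d := by
    refine ⟨J.pow_mem_of_mem hfJ r (by omega), ?_⟩
    rw [← pow_mul, mul_comm, pow_mul]
    exact Ideal.pow_mem_pow hf.mem_pow_idealOfVars r
  rw [hVV d (by omega)] at hfr
  have hfr' : f ^ r ∈ idealOfVars (Fin n) K ^ (d + r * (d - 1)) := by
    rw [pow_add, pow_mul]
    exact Ideal.mul_mono_left (le_pow_idealOfVars_indeg hhom) hfr
  have hle := (hf.pow r).le_of_mem_pow_idealOfVars (pow_ne_zero r hf0) hfr'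
  obtain ⟨e, he⟩ : ∃ e, d = e + 1 := ⟨d - 1, by omega⟩
  rw [he, Nat.add_sub_cancel] at hle
  nlinarith
end

section
/- Let R be a commutative ring and q, J, I ideals of R with q^r ⊆ J ⊆ I ⊆ q^s for integers r ≥ s ≥ 1. Set k = ⌈r/s⌉. Then J ∩ I^t = (J ∩ I^k)·I^{t-k} for all t ≥ k; in particular, the Artin-Rees number AR(J,I) is at most ⌈r/s⌉. -/
/-- Let `q, J, I` be ideals of a commutative ring `R` with
`q^r ⊆ J ⊆ I ⊆ q^s` for integers `r ≥ s ≥ 1`, and let `k = ⌈r/s⌉ = (r + s - 1)/s`.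
Then `J ∩ I^t = (J ∩ I^k)·I^{t-k}` for all `t ≥ k`; in particular the Artin–Rees number
`AR(J,I) = min { k : ∀ t ≥ k, J ∩ I^t = (J ∩ I^k)·I^{t-k} }` is at most `⌈r/s⌉`. -/
theorem artinRees_le_ceil {R : Type} [CommRing R] (q J I : Ideal R) (r s : ℕ)
    (hs : 1 ≤ s) (hsr : s ≤ r)
    (hqJ : q ^ r ≤ J) (hJI : J ≤ I) (hIq : I ≤ q ^ s) :
    (∀ t ≥ (r + s - 1) / s,
        J ⊓ I ^ t = (J ⊓ I ^ ((r + s - 1) / s)) * I ^ (t - (r + s - 1) / s)) ∧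
    sInf {k : ℕ | ∀ t ≥ k, J ⊓ I ^ t = (J ⊓ I ^ k) * I ^ (t - k)} ≤ (r + s - 1) / s := by
  set k := (r + s - 1) / s with hk
  have hsk : r ≤ s * k := by
    have h := Nat.div_add_mod (r + s - 1) s
    rw [← hk] at h
    have hm : (r + s - 1) % s < s := Nat.mod_lt _ hs
    omega
  have hIkJ : I ^ k ≤ J := by
    calc I ^ k ≤ (q ^ s) ^ k := Ideal.pow_right_mono hIq k
      _ = q ^ (s * k) := by rw [← pow_mul]
      _ ≤ q ^ r := Ideal.pow_le_pow_right hsk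
      _ ≤ J := hqJ
  have main : ∀ t ≥ k, J ⊓ I ^ t = (J ⊓ I ^ k) * I ^ (t - k) := by
    intro t ht
    have h1 : I ^ t ≤ J := le_trans (Ideal.pow_le_pow_right ht) hIkJ
    rw [inf_eq_right.mpr h1, inf_eq_right.mpr hIkJ, ← pow_add,
      Nat.add_sub_cancel' ht]
  exact ⟨main, Nat.sInf_le main⟩
end

section
/- Let G be a finite simple graph on vertex set [n] = {1,...,n} and G' a subgraph of G, with edge ideals J = I(G') and I = I(G) in K[x_1,...,x_n] over a field K. Then J ∩ I^t = J·I^{t-1} for all t ≥ 1 if and only if G' is both an almost C_3-embedded and an almost P_3-embedded subgraph of G. -/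
/-!
Both ideals are monomial ideals, so `J ∩ I^t = J·I^{t-1}` says that every monomial divisible by an
edge of `G'` and by a product of `t` edges of `G` is divisible by an edge of `G'` times `t - 1`
edges of `G`.

For `t = 2`, the monomials `x_i x_j x_k²` of a triangle and `x_{i'} x_i x_j x_{j'}` of a path
`i'–i–j–j'` with `{i', j'} ∉ E(G)` can be split into two edges only in the ways the two embedding
conditions list, so these conditions are necessary.

Conversely, let `m` be divisible by an edge `ij` of `G'` and by edges `e₁, …, e_t` of `G`, none
in `G'`. If the product of the `e_s` leaves a spare factor `x_i` in `m`, or some `e_s` contains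
`i`, and likewise for `j`, then one `e_s` can be traded for `ij`. Otherwise `i` and `j` are
covered by two edges `ki` and `lj`; the almost `C₃` condition gives `k ≠ l`, and then the edge
`kl` or the almost `P₃` condition rewrites `x_k x_i · x_l x_j` as an edge of `G'` times an edge
of `G`.
-/

open MvPolynomial Pointwise

/-- The edge ideal of a finite simple graph on `[n]`: the ideal of `K[x_1,…,x_n]`
generated by the monomials `x_i x_j` with `{i,j}` an edge of `G`. -/
noncomputable def edgeIdeal (K : Type) [Field K] {n : ℕ} (G : SimpleGraph (Fin n)) :
    Ideal (MvPolynomial (Fin n) K) :=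
  Ideal.span {p | ∃ i j : Fin n, G.Adj i j ∧ p = MvPolynomial.X i * MvPolynomial.X j}

/-- `G'` is an almost `C₃`-embedded subgraph of `G`: for every 3-cycle `i–j–k–i` in `G`
with `{i,j} ∈ E(G')`, either `{i,k} ∈ E(G')` or `{j,k} ∈ E(G')`. -/
def AlmostC3Embedded {n : ℕ} (G' G : SimpleGraph (Fin n)) : Prop :=
  ∀ i j k : Fin n, G.Adj i j → G.Adj j k → G.Adj k i → G'.Adj i j →
    G'.Adj i k ∨ G'.Adj j k

/-- `G'` is an almost `P₃`-embedded subgraph of `G`: for every path `i'–i–j–j'` in `G` on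
four distinct vertices with `{i,j} ∈ E(G')` and `{i',j'} ∉ E(G)`, one of:
`{i',i} ∈ E(G')`; `{j,j'} ∈ E(G')`; `{i',j} ∈ E(G')` and `{i,j'} ∈ E(G)`;
`{i,j'} ∈ E(G')` and `{i',j} ∈ E(G)`. -/
def AlmostP3Embedded {n : ℕ} (G' G : SimpleGraph (Fin n)) : Prop :=
  ∀ i' i j j' : Fin n, i' ≠ j → i ≠ j' → i' ≠ j' →
    G.Adj i' i → G.Adj i j → G.Adj j j' → G'.Adj i j → ¬ G.Adj i' j' →
    (G'.Adj i' i ∨ G'.Adj j j' ∨ (G'.Adj i' j ∧ G.Adj i j') ∨ (G'.Adj i j' ∧ G.Adj i' j))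

namespace Set

variable {M : Type*} [AddCommMonoid M]

def multisetSums (S : Set M) (t : ℕ) : Set M :=
  {u | ∃ A : Multiset M, Multiset.card A = t ∧ (∀ x ∈ A, x ∈ S) ∧ A.sum = u}

theorem multisetSums_zero (S : Set M) : multisetSums S 0 = {0} := by
  ext u
  simp [multisetSums, eq_comm]

theorem multisetSums_succ (S : Set M) (t : ℕ) :
    multisetSums S (t + 1) = S + multisetSums S t := by
  classical
  ext u
  constructor
  · rintro ⟨A, hcard, hA, rfl⟩
    obtain ⟨x, hx⟩ := Multiset.card_pos_iff_exists_mem.1 (by rw [hcard]; exact t.succ_pos)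
    refine ⟨x, hA x hx, (A.erase x).sum,
      ⟨A.erase x, ?_, fun y hy => hA y (Multiset.mem_of_mem_erase hy), rfl⟩, Multiset.sum_erase hx⟩
    rw [Multiset.card_erase_of_mem hx, hcard, Nat.pred_succ]
  · rintro ⟨x, hx, _, ⟨A, hcard, hA, rfl⟩, rfl⟩
    refine ⟨x ::ₘ A, by rw [Multiset.card_cons, hcard], ?_, Multiset.sum_cons x A⟩
    simpa [hx] using hA

theorem multisetSums_one (S : Set M) : multisetSums S 1 = S := by
  rw [multisetSums_succ, multisetSums_zero, add_singleton]
  simp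

end Set

namespace MvPolynomial

variable {σ R : Type*} [CommSemiring R]

variable (R) in
noncomputable def monomialIdeal (S : Set (σ →₀ ℕ)) : Ideal (MvPolynomial σ R) :=
  Ideal.span ((fun s => monomial s (1 : R)) '' S)

theorem mem_monomialIdeal {S : Set (σ →₀ ℕ)} {p : MvPolynomial σ R} :
    p ∈ monomialIdeal R S ↔ ∀ m ∈ p.support, m ∈ upperClosure S :=
  mem_ideal_span_monomial_image

theorem monomial_one_mem_monomialIdeal [Nontrivial R] {S : Set (σ →₀ ℕ)} {m : σ →₀ ℕ} :
    monomial m (1 : R) ∈ monomialIdeal R S ↔ m ∈ upperClosure S := by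
  classical
  rw [mem_monomialIdeal, support_monomial, if_neg one_ne_zero]
  simp

theorem monomialIdeal_mul (S T : Set (σ →₀ ℕ)) :
    monomialIdeal R S * monomialIdeal R T = monomialIdeal R (S + T) := by
  rw [monomialIdeal, monomialIdeal, Ideal.span_mul_span', monomialIdeal]
  congr 1
  ext p
  constructor
  · rintro ⟨_, ⟨s, hs, rfl⟩, _, ⟨t, ht, rfl⟩, rfl⟩
    exact ⟨s + t, Set.add_mem_add hs ht, by simp [monomial_mul]⟩
  · rintro ⟨_, ⟨s, hs, t, ht, rfl⟩, rfl⟩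
    exact ⟨_, ⟨s, hs, rfl⟩, _, ⟨t, ht, rfl⟩, by simp [monomial_mul]⟩

theorem monomialIdeal_pow (S : Set (σ →₀ ℕ)) (t : ℕ) :
    monomialIdeal R S ^ t = monomialIdeal R (S.multisetSums t) := by
  induction t with
  | zero => simp [Set.multisetSums_zero, monomialIdeal, Ideal.one_eq_top]
  | succ t ih => rw [pow_succ', ih, monomialIdeal_mul, Set.multisetSums_succ]

theorem monomialIdeal_inf_eq_iff [Nontrivial R] {S T U : Set (σ →₀ ℕ)} :
    monomialIdeal R S ⊓ monomialIdeal R T = monomialIdeal R U ↔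
      (upperClosure S : Set (σ →₀ ℕ)) ∩ upperClosure T = upperClosure U := by
  constructor
  · intro h
    ext m
    have := congrArg (monomial m (1 : R) ∈ ·) h
    simpa [Submodule.mem_inf, monomial_one_mem_monomialIdeal] using this
  · intro h
    ext p
    rw [Submodule.mem_inf, mem_monomialIdeal, mem_monomialIdeal, mem_monomialIdeal, ← forall₂_and]
    exact forall₂_congr fun m _ => Set.ext_iff.1 h m

end MvPolynomial

section MultisetExchange

variable {σ : Type*} [DecidableEq σ] {S S' : Set (σ →₀ ℕ)} {A : Multiset (σ →₀ ℕ)}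
  {m : σ →₀ ℕ} {t : ℕ}

theorem mem_upperClosure_add_multisetSums_of_le_tsub_add (hA : ∀ e ∈ A, e ∈ S)
    (hcard : Multiset.card A = t + 1) (hAm : A.sum ≤ m) {e f : σ →₀ ℕ} (heA : e ∈ A)
    (hf : f ∈ S') (hfe : f ≤ m - A.sum + e) :
    m ∈ upperClosure (S' + S.multisetSums t) := by
  refine ⟨f + (A.erase e).sum, Set.add_mem_add hf ⟨A.erase e, ?_,
    fun x hx => hA x (Multiset.mem_of_mem_erase hx), rfl⟩, ?_⟩
  · rw [Multiset.card_erase_of_mem heA, hcard, Nat.pred_succ]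
  · calc f + (A.erase e).sum ≤ m - A.sum + e + (A.erase e).sum := by gcongr
      _ = m := by rw [add_assoc, Multiset.sum_erase heA, tsub_add_cancel_of_le hAm]

theorem mem_upperClosure_add_multisetSums_of_add_eq_add (hA : ∀ e ∈ A, e ∈ S)
    (hcard : Multiset.card A = t + 1) (hAm : A.sum ≤ m) {e₁ e₂ f₁ f₂ : σ →₀ ℕ}
    (he₁ : e₁ ∈ A) (he₂ : e₂ ∈ A.erase e₁) (hf₁ : f₁ ∈ S') (hf₂ : f₂ ∈ S)
    (hf : f₁ + f₂ = e₁ + e₂) :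
    m ∈ upperClosure (S' + S.multisetSums t) := by
  refine ⟨f₁ + (f₂ ::ₘ (A.erase e₁).erase e₂).sum, Set.add_mem_add hf₁ ⟨_, ?_, ?_, rfl⟩, ?_⟩
  · have hcard₁ : Multiset.card (A.erase e₁) = t := by
      rw [Multiset.card_erase_of_mem he₁, hcard, Nat.pred_succ]
    rw [Multiset.card_cons, Multiset.card_erase_of_mem he₂, hcard₁]
    exact Nat.succ_pred_eq_of_pos (hcard₁ ▸ Multiset.card_pos_iff_exists_mem.2 ⟨e₂, he₂⟩)
  · simp only [Multiset.mem_cons, forall_eq_or_imp]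
    exact ⟨hf₂, fun x hx => hA x (Multiset.mem_of_mem_erase (Multiset.mem_of_mem_erase hx))⟩
  · calc f₁ + (f₂ ::ₘ (A.erase e₁).erase e₂).sum = e₁ + (e₂ + ((A.erase e₁).erase e₂).sum) := by
          rw [Multiset.sum_cons, ← add_assoc, hf, add_assoc]
      _ = A.sum := by rw [Multiset.sum_erase he₂, Multiset.sum_erase he₁]
      _ ≤ m := hAm

end MultisetExchange

namespace Multiset

variable {α : Type*}

theorem sym2_eq_of_cons_cons_eq {a b c d : α} (h : a ::ₘ b ::ₘ 0 = c ::ₘ d ::ₘ 0) :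
    s(a, b) = s(c, d) := by
  simp only [cons_eq_cons, cons_zero, singleton_inj, singleton_eq_cons_iff] at h
  aesop

theorem eq_and_sym2_eq_of_cons_cons_cons_eq {q r s b c d : α}
    (h : q ::ₘ r ::ₘ s ::ₘ 0 = b ::ₘ c ::ₘ d ::ₘ 0) :
    (q = b ∧ s(r, s) = s(c, d)) ∨ (q = c ∧ s(r, s) = s(b, d)) ∨ (q = d ∧ s(r, s) = s(b, c)) := by
  have hq : q ∈ b ::ₘ c ::ₘ d ::ₘ 0 := h ▸ mem_cons_self q _
  simp only [mem_cons, notMem_zero, or_false] at hq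
  rcases hq with rfl | rfl | rfl
  · exact .inl ⟨rfl, sym2_eq_of_cons_cons_eq ((cons_inj_right q).1 h)⟩
  · rw [cons_swap b] at h
    exact .inr (.inl ⟨rfl, sym2_eq_of_cons_cons_eq ((cons_inj_right q).1 h)⟩)
  · rw [cons_swap c, cons_swap b] at h
    exact .inr (.inr ⟨rfl, sym2_eq_of_cons_cons_eq ((cons_inj_right q).1 h)⟩)

theorem sym2_pairing_of_pair_add_pair_eq {p q r s a b c d : α}
    (h : ({p, q} : Multiset α) + {r, s} = {a, b} + {c, d}) :
    (s(p, q) = s(a, b) ∧ s(r, s) = s(c, d)) ∨ (s(p, q) = s(c, d) ∧ s(r, s) = s(a, b)) ∨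
    (s(p, q) = s(a, c) ∧ s(r, s) = s(b, d)) ∨ (s(p, q) = s(b, d) ∧ s(r, s) = s(a, c)) ∨
    (s(p, q) = s(a, d) ∧ s(r, s) = s(b, c)) ∨ (s(p, q) = s(b, c) ∧ s(r, s) = s(a, d)) := by
  simp only [insert_eq_cons, ← cons_zero, cons_add, zero_add] at h
  have hp : p ∈ a ::ₘ b ::ₘ c ::ₘ d ::ₘ 0 := h ▸ mem_cons_self p _
  simp only [mem_cons, notMem_zero, or_false] at hp
  rcases hp with rfl | rfl | rfl | rfl
  · rcases eq_and_sym2_eq_of_cons_cons_cons_eq ((cons_inj_right p).1 h) with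
      ⟨rfl, e⟩ | ⟨rfl, e⟩ | ⟨rfl, e⟩ <;> simp [e]
  · rw [cons_swap a] at h
    rcases eq_and_sym2_eq_of_cons_cons_cons_eq ((cons_inj_right p).1 h) with
      ⟨rfl, e⟩ | ⟨rfl, e⟩ | ⟨rfl, e⟩ <;> simp [e, Sym2.eq_swap]
  · rw [cons_swap b, cons_swap a] at h
    rcases eq_and_sym2_eq_of_cons_cons_cons_eq ((cons_inj_right p).1 h) with
      ⟨rfl, e⟩ | ⟨rfl, e⟩ | ⟨rfl, e⟩ <;> simp [e, Sym2.eq_swap]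
  · rw [cons_swap c, cons_swap b, cons_swap a] at h
    rcases eq_and_sym2_eq_of_cons_cons_cons_eq ((cons_inj_right p).1 h) with
      ⟨rfl, e⟩ | ⟨rfl, e⟩ | ⟨rfl, e⟩ <;> simp [e, Sym2.eq_swap]

end Multiset

section EdgeExponents

variable {V : Type*}

noncomputable def edgeExponent (i j : V) : V →₀ ℕ := Finsupp.single i 1 + Finsupp.single j 1

def edgeExponents (G : SimpleGraph V) : Set (V →₀ ℕ) :=
  {e | ∃ i j, G.Adj i j ∧ edgeExponent i j = e}

theorem edgeExponent_comm (i j : V) : edgeExponent i j = edgeExponent j i := add_comm _ _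

theorem mem_support_edgeExponent {i j x : V} : x ∈ (edgeExponent i j).support ↔ x = i ∨ x = j := by
  classical
  simp only [edgeExponent, Finsupp.mem_support_iff, Finsupp.add_apply, Finsupp.single_apply]
  split_ifs <;> simp_all [eq_comm]

theorem edgeExponent_le_iff {i j : V} (hij : i ≠ j) {w : V →₀ ℕ} :
    edgeExponent i j ≤ w ↔ i ∈ w.support ∧ j ∈ w.support := by
  classical
  simp only [Finsupp.le_def, edgeExponent, Finsupp.add_apply, Finsupp.single_apply,
    Finsupp.mem_support_iff]
  constructor
  · intro h
    have hi := h i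
    have hj := h j
    simp [hij, hij.symm] at hi hj
    omega
  · rintro ⟨hi, hj⟩ x
    by_cases hix : i = x <;> by_cases hjx : j = x <;> simp only [hix, hjx, if_true, if_false]
    · exact absurd (hix.trans hjx.symm) hij
    · subst hix; omega
    · subst hjx; omega
    · omega

theorem toMultiset_edgeExponent (i j : V) : Finsupp.toMultiset (edgeExponent i j) = {i, j} := by
  simp [edgeExponent, Finsupp.toMultiset_add, Finsupp.toMultiset_single, Multiset.insert_eq_cons]

theorem edgeExponents_mono {G' G : SimpleGraph V} (h : G' ≤ G) :
    edgeExponents G' ⊆ edgeExponents G := by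
  rintro _ ⟨i, j, hij, rfl⟩
  exact ⟨i, j, h hij, rfl⟩

theorem adj_pairing_of_edgeExponent_add_le {G' G : SimpleGraph V} {p q r s a b c d : V}
    (hpq : G'.Adj p q) (hrs : G.Adj r s)
    (h : edgeExponent p q + edgeExponent r s ≤ edgeExponent a b + edgeExponent c d) :
    (G'.Adj a b ∧ G.Adj c d) ∨ (G'.Adj c d ∧ G.Adj a b) ∨ (G'.Adj a c ∧ G.Adj b d) ∨
    (G'.Adj b d ∧ G.Adj a c) ∨ (G'.Adj a d ∧ G.Adj b c) ∨ (G'.Adj b c ∧ G.Adj a d) := by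
  classical
  have hle := Finsupp.orderIsoMultiset.monotone h
  simp only [Finsupp.coe_orderIsoMultiset, Finsupp.toMultiset_add,
    toMultiset_edgeExponent] at hle
  have hpairs := Multiset.sym2_pairing_of_pair_add_pair_eq
    (Multiset.eq_of_le_of_card_le hle (by simp))
  rcases hpairs with ⟨e, f⟩ | ⟨e, f⟩ | ⟨e, f⟩ | ⟨e, f⟩ | ⟨e, f⟩ | ⟨e, f⟩ <;>
    rw [G'.adj_congr_of_sym2 e] at hpq <;> rw [G.adj_congr_of_sym2 f] at hrs <;> tauto

variable {G G' : SimpleGraph V}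

theorem mem_support_tsub_or_exists_adj {A : Multiset (V →₀ ℕ)} {m : V →₀ ℕ}
    (hA : ∀ e ∈ A, e ∈ edgeExponents G) (hAm : A.sum ≤ m) {x : V} (hx : x ∈ m.support) :
    x ∈ (m - A.sum).support ∨ ∃ c, G.Adj c x ∧ edgeExponent c x ∈ A := by
  by_cases hr : x ∈ (m - A.sum).support
  · exact .inl hr
  right
  have hxA : x ∈ A.sum.support := by
    have := Finsupp.le_def.1 hAm x
    simp only [Finsupp.mem_support_iff, Finsupp.tsub_apply, ne_eq, not_not] at hr hx ⊢
    omega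
  obtain ⟨e, heA, hxe⟩ := Finsupp.mem_support_multiset_sum x hxA
  obtain ⟨a, b, hab, rfl⟩ := hA e heA
  rcases mem_support_edgeExponent.1 hxe with rfl | rfl
  · exact ⟨b, hab.symm, edgeExponent_comm x b ▸ heA⟩
  · exact ⟨a, hab, heA⟩

/- `m ∈ upperClosure S` says that `x^m` is divisible by `x^s` for some `s ∈ S`, so this is
`I(G') ∩ I(G)^(t+1) ⊆ I(G') * I(G)^t` read off on monomials. -/
def EdgeExchange (G' G : SimpleGraph V) (t : ℕ) : Prop :=
  (upperClosure (edgeExponents G') : Set (V →₀ ℕ)) ∩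
      upperClosure ((edgeExponents G).multisetSums (t + 1)) ⊆
    upperClosure (edgeExponents G' + (edgeExponents G).multisetSums t)

theorem upperClosure_add_multisetSums_subset (h : G' ≤ G) (t : ℕ) :
    (upperClosure (edgeExponents G' + (edgeExponents G).multisetSums t) : Set (V →₀ ℕ)) ⊆
      ↑(upperClosure (edgeExponents G')) ∩
        ↑(upperClosure ((edgeExponents G).multisetSums (t + 1))) := by
  rintro m ⟨_, ⟨e, he, u, hu, rfl⟩, hm⟩
  refine ⟨⟨e, he, le_trans le_self_add hm⟩, ⟨e + u, ?_, hm⟩⟩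
  rw [Set.multisetSums_succ]
  exact Set.add_mem_add (edgeExponents_mono h he) hu

theorem EdgeExchange.adj_pairing (hVV : EdgeExchange G' G 1) {x y a b c d : V}
    (hxy : G'.Adj x y) (hab : G.Adj a b) (hcd : G.Adj c d)
    (hle : edgeExponent x y ≤ edgeExponent a b + edgeExponent c d) :
    (G'.Adj a b ∧ G.Adj c d) ∨ (G'.Adj c d ∧ G.Adj a b) ∨ (G'.Adj a c ∧ G.Adj b d) ∨
    (G'.Adj b d ∧ G.Adj a c) ∨ (G'.Adj a d ∧ G.Adj b c) ∨ (G'.Adj b c ∧ G.Adj a d) := by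
  have hm : edgeExponent a b + edgeExponent c d ∈ (edgeExponents G).multisetSums 2 := by
    rw [Set.multisetSums_succ, Set.multisetSums_one]
    exact Set.add_mem_add ⟨a, b, hab, rfl⟩ ⟨c, d, hcd, rfl⟩
  obtain ⟨_, ⟨_, ⟨p, q, hpq, rfl⟩, _, hrs, rfl⟩, hle'⟩ :=
    hVV ⟨⟨_, ⟨x, y, hxy, rfl⟩, hle⟩, ⟨_, hm, le_rfl⟩⟩
  rw [Set.multisetSums_one] at hrs
  obtain ⟨r, s, hrs, rfl⟩ := hrs
  exact adj_pairing_of_edgeExponent_add_le hpq hrs hle'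

end EdgeExponents

theorem edgeIdeal_eq_monomialIdeal (K : Type) [Field K] {n : ℕ} (G : SimpleGraph (Fin n)) :
    edgeIdeal K G = monomialIdeal K (edgeExponents G) := by
  unfold edgeIdeal monomialIdeal
  congr 1
  ext p
  constructor
  · rintro ⟨i, j, hij, rfl⟩
    exact ⟨edgeExponent i j, ⟨i, j, hij, rfl⟩, by simp [edgeExponent, X, monomial_mul]⟩
  · rintro ⟨_, ⟨i, j, hij, rfl⟩, rfl⟩
    exact ⟨i, j, hij, by simp [edgeExponent, X, monomial_mul]⟩

theorem edgeIdeal_inf_pow_succ_eq_iff (K : Type) [Field K] {n : ℕ} {G G' : SimpleGraph (Fin n)}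
    (h : G' ≤ G) (t : ℕ) :
    edgeIdeal K G' ⊓ edgeIdeal K G ^ (t + 1) = edgeIdeal K G' * edgeIdeal K G ^ t ↔
      EdgeExchange G' G t := by
  rw [edgeIdeal_eq_monomialIdeal, edgeIdeal_eq_monomialIdeal, monomialIdeal_pow, monomialIdeal_pow,
    monomialIdeal_mul, monomialIdeal_inf_eq_iff, Set.Subset.antisymm_iff]
  exact and_iff_left (upperClosure_add_multisetSums_subset h t)

section AlmostEmbedded

variable {n : ℕ} {G G' : SimpleGraph (Fin n)}

theorem EdgeExchange.almostC3Embedded (hVV : EdgeExchange G' G 1) : AlmostC3Embedded G' G := by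
  intro i j k _ hjk hki hij
  by_contra! hnot
  have hle : edgeExponent i j ≤ edgeExponent i k + edgeExponent j k :=
    le_of_le_of_eq (le_self_add (b := edgeExponent k k)) (by simp only [edgeExponent]; abel)
  rcases hVV.adj_pairing hij hki.symm hjk hle with h | h | h | h | h | h <;>
    simp_all [SimpleGraph.adj_comm]

theorem EdgeExchange.almostP3Embedded (h : G' ≤ G) (hVV : EdgeExchange G' G 1) :
    AlmostP3Embedded G' G := by
  intro i' i j j' _ _ _ hi'i _ hjj' hij hi'j'
  have hle : edgeExponent i j ≤ edgeExponent i' i + edgeExponent j j' :=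
    le_of_le_of_eq (le_self_add (b := edgeExponent i' j')) (by simp only [edgeExponent]; abel)
  rcases hVV.adj_pairing hij hi'i hjj' hle with h₁ | h₁ | h₁ | h₁ | h₁ | h₁
  · exact .inl h₁.1
  · exact .inr (.inl h₁.1)
  · exact .inr (.inr (.inl h₁))
  · exact .inr (.inr (.inr h₁))
  · exact absurd (h h₁.1) hi'j'
  · exact absurd h₁.2 hi'j'

theorem AlmostC3Embedded.ne_of_not_adj (hC : AlmostC3Embedded G' G) {i j k l : Fin n}
    (hij : G'.Adj i j) (hGij : G.Adj i j) (hki : G.Adj k i) (hlj : G.Adj l j)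
    (hki' : ¬G'.Adj k i) (hlj' : ¬G'.Adj l j) : k ≠ l := by
  rintro rfl
  rcases hC i j k hGij hlj.symm hki hij with hik | hjk
  · exact hki' hik.symm
  · exact hlj' hjk.symm

theorem AlmostP3Embedded.exists_swap (h : G' ≤ G) (hP : AlmostP3Embedded G' G) {i j k l : Fin n}
    (hij : G'.Adj i j) (hki : G.Adj k i) (hlj : G.Adj l j)
    (hki' : ¬G'.Adj k i) (hlj' : ¬G'.Adj l j) (hkl : k ≠ l) :
    ∃ f₁ ∈ edgeExponents G', ∃ f₂ ∈ edgeExponents G,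
      f₁ + f₂ = edgeExponent k i + edgeExponent l j := by
  have hkj : k ≠ j := by rintro rfl; exact hki' hij.symm
  have hil : i ≠ l := by rintro rfl; exact hlj' hij
  by_cases hkl' : G.Adj k l
  · exact ⟨_, ⟨i, j, hij, rfl⟩, _, ⟨k, l, hkl', rfl⟩, by simp only [edgeExponent]; abel⟩
  rcases hP k i j l hkj hil hkl hki (h hij) hlj.symm hij hkl' with
    hki'' | hjl | ⟨hkj', hil'⟩ | ⟨hil', hkj'⟩
  · exact absurd hki'' hki'
  · exact absurd hjl.symm hlj'
  · exact ⟨_, ⟨k, j, hkj', rfl⟩, _, ⟨i, l, hil', rfl⟩, by simp only [edgeExponent]; abel⟩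
  · exact ⟨_, ⟨i, l, hil', rfl⟩, _, ⟨k, j, hkj', rfl⟩, by simp only [edgeExponent]; abel⟩

theorem edgeExchange_of_almostEmbedded (h : G' ≤ G)
    (hC : AlmostC3Embedded G' G) (hP : AlmostP3Embedded G' G) (t : ℕ) :
    EdgeExchange G' G t := by
  rintro m ⟨⟨_, ⟨i, j, hij, rfl⟩, hijm⟩, ⟨_, ⟨A, hcard, hA, rfl⟩, hAm⟩⟩
  by_cases hA' : ∃ e ∈ A, e ∈ edgeExponents G'
  · obtain ⟨e, heA, he⟩ := hA'
    exact mem_upperClosure_add_multisetSums_of_le_tsub_add hA hcard hAm heA he le_add_self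
  have hnot {c x : Fin n} (hcA : edgeExponent c x ∈ A) : ¬G'.Adj c x :=
    fun hG => hA' ⟨_, hcA, c, x, hG, rfl⟩
  have hreplace (e) (heA : e ∈ A) (hi : i ∈ (m - A.sum + e).support)
      (hj : j ∈ (m - A.sum + e).support) :
      m ∈ upperClosure (edgeExponents G' + (edgeExponents G).multisetSums t) :=
    mem_upperClosure_add_multisetSums_of_le_tsub_add hA hcard hAm heA ⟨i, j, hij, rfl⟩
      ((edgeExponent_le_iff hij.ne).2 ⟨hi, hj⟩)
  have hend {c x : Fin n} : x ∈ (edgeExponent c x).support := mem_support_edgeExponent.2 (.inr rfl)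
  obtain ⟨hi, hj⟩ := (edgeExponent_le_iff hij.ne).1 hijm
  rcases mem_support_tsub_or_exists_adj hA hAm hi with hri | ⟨k, hki, hkA⟩ <;>
    rcases mem_support_tsub_or_exists_adj hA hAm hj with hrj | ⟨l, hlj, hlA⟩
  · obtain ⟨e, heA⟩ := Multiset.card_pos_iff_exists_mem.1 (by rw [hcard]; exact t.succ_pos)
    exact hreplace e heA (Finsupp.support_mono le_self_add hri)
      (Finsupp.support_mono le_self_add hrj)
  · exact hreplace _ hlA (Finsupp.support_mono le_self_add hri)
      (Finsupp.support_mono le_add_self hend)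
  · exact hreplace _ hkA (Finsupp.support_mono le_add_self hend)
      (Finsupp.support_mono le_self_add hrj)
  · have hkl := hC.ne_of_not_adj hij (h hij) hki hlj (hnot hkA) (hnot hlA)
    obtain ⟨f₁, hf₁, f₂, hf₂, hf⟩ := hP.exists_swap h hij hki hlj (hnot hkA) (hnot hlA) hkl
    refine mem_upperClosure_add_multisetSums_of_add_eq_add hA hcard hAm hkA
      ((Multiset.mem_erase_of_ne ?_).2 hlA) hf₁ hf₂ hf
    -- of the two edges, only `lj` contains `j`
    intro heq
    rcases mem_support_edgeExponent.1 (heq ▸ hend : j ∈ (edgeExponent k i).support) with rfl | rfl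
    · exact hnot hkA hij.symm
    · exact hij.ne rfl

end AlmostEmbedded

/-- Let `G'` be a subgraph of `G`, `J = I(G')`, `I = I(G)`.  Then
`J ∩ I^t = J·I^{t-1}` for all `t ≥ 1` (vanishing of the Valabrega–Valla module) iff `G'`
is both an almost `C₃`-embedded and an almost `P₃`-embedded subgraph of `G`. -/
theorem VV_edgeIdeals_vanishes_iff {K : Type} [Field K] {n : ℕ}
    (G G' : SimpleGraph (Fin n)) (h : G' ≤ G) :
    (∀ t : ℕ, 1 ≤ t →
        edgeIdeal K G' ⊓ (edgeIdeal K G) ^ t = edgeIdeal K G' * (edgeIdeal K G) ^ (t - 1)) ↔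
      (AlmostC3Embedded G' G ∧ AlmostP3Embedded G' G) := by
  constructor
  · intro hVV
    have hVV₂ := (edgeIdeal_inf_pow_succ_eq_iff K h 1).1 (hVV 2 one_le_two)
    exact ⟨hVV₂.almostC3Embedded, hVV₂.almostP3Embedded h⟩
  · rintro ⟨hC, hP⟩ t ht
    obtain ⟨t, rfl⟩ := Nat.exists_eq_add_of_le' ht
    rw [Nat.add_sub_cancel, edgeIdeal_inf_pow_succ_eq_iff K h]
    exact edgeExchange_of_almostEmbedded h hC hP t
end

section
/- Let K_n be the complete graph on vertex set [n] = {1,...,n} and G' a subgraph of K_n, with edge ideals J = I(G') and I = I(K_n) in K[x_1,...,x_n] over a field K. Then J ∩ I^t = J·I^{t-1} for all t ≥ 1 if and only if for every edge {i,j} of G' one has N_{G'}(i) ∪ N_{G'}(j) = [n]. -/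
/-! All ideals involved are monomial ideals, so everything reduces to exponent vectors, and
`J·I^{t-1} ≤ J ⊓ I^t` always holds. Suppose the neighbourhoods of every edge `ij` of `G'` cover
`[n]`, and let a monomial be divisible by `x_i x_j` and by a product `P` of `t` edges of `K_n`.
If `P` avoids `i` and `j`, replace any edge of `P` by `ij`. Otherwise `P` has an edge `ic`, say;
if `ic ∉ G'` then `jc ∈ G'`, and either the rest of `P` avoids `j`, so that `jc` can replace `ic`,
or it has an edge `jc'`, and `ic, jc'` regroup as `jc, ic'` (or as `ij, ic` if `c' = i`).
Conversely, if `k` is adjacent to neither `i` nor `j`, then `x_i x_j x_k²` lies in `J ⊓ I²` but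
not in `J·I`: by degree, a factorisation through an edge of `G'` would put an edge of `G'`
at `k`. -/

open MvPolynomial Finsupp Pointwise

lemma Finsupp.single_add_le_of_apply_eq_zero {σ : Type*} {d y : σ →₀ ℕ} {j : σ} {m : ℕ}
    (hj : single j m ≤ d) (hy : y ≤ d) (hyj : y j = 0) : single j m + y ≤ d := by
  intro v
  by_cases hv : j = v
  · subst hv
    simpa [hyj] using hj j
  · classical
    simpa [single_apply, hv] using hy v

lemma Finsupp.eq_of_le_of_degree_le {σ : Type*} {f g : σ →₀ ℕ} (hfg : f ≤ g)
    (hdeg : g.degree ≤ f.degree) : f = g := by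
  obtain ⟨r, rfl⟩ := exists_add_of_le hfg
  rw [map_add] at hdeg
  rw [(degree_eq_zero_iff r).mp (by omega), add_zero]

section Combinatorics

variable {σ : Type*}

noncomputable def edgeExp (i j : σ) : σ →₀ ℕ := single i 1 + single j 1

lemma edgeExp_comm (i j : σ) : edgeExp i j = edgeExp j i := add_comm _ _

lemma single_le_edgeExp_left (i j : σ) : single i 1 ≤ edgeExp i j := le_self_add

lemma single_le_edgeExp_right (i j : σ) : single j 1 ≤ edgeExp i j := le_add_self

lemma edgeExp_apply_ne_zero_iff {i j v : σ} : edgeExp i j v ≠ 0 ↔ v = i ∨ v = j := by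
  classical
  simp only [edgeExp, Finsupp.coe_add, Pi.add_apply, single_apply, ne_eq, Nat.add_eq_zero_iff]
  split_ifs <;> simp_all [eq_comm]

lemma edgeExp_apply_le_one {i j : σ} (h : i ≠ j) (v : σ) : edgeExp i j v ≤ 1 := by
  classical
  simp only [edgeExp, Finsupp.coe_add, Pi.add_apply, single_apply]
  split_ifs <;> simp_all

lemma edgeExp_apply_right {i j : σ} (h : i ≠ j) : edgeExp i j j = 1 := by
  simp [edgeExp, single_eq_of_ne' h]

lemma degree_edgeExp (i j : σ) : (edgeExp i j).degree = 2 := by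
  simp [edgeExp]

def edgeExpSet (G : SimpleGraph σ) : Set (σ →₀ ℕ) := {e | ∃ i j, G.Adj i j ∧ edgeExp i j = e}

/-- `x^e` is one of the monomial generators `x_{i₁}x_{j₁}⋯x_{iₜ}x_{jₜ}` of `I(G)^t`. -/
inductive IsEdgeSum (G : SimpleGraph σ) : ℕ → (σ →₀ ℕ) → Prop
  | zero : IsEdgeSum G 0 0
  | add {t : ℕ} {i j : σ} {e : σ →₀ ℕ} :
      G.Adj i j → IsEdgeSum G t e → IsEdgeSum G (t + 1) (edgeExp i j + e)

lemma setOf_isEdgeSum_succ (G : SimpleGraph σ) (t : ℕ) :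
    {e | IsEdgeSum G (t + 1) e} = edgeExpSet G + {e | IsEdgeSum G t e} := by
  ext e
  constructor
  · rintro (_ | ⟨hij, hf⟩)
    exact ⟨_, ⟨_, _, hij, rfl⟩, _, hf, rfl⟩
  · rintro ⟨_, ⟨i, j, hij, rfl⟩, f, hf, rfl⟩
    exact .add hij hf

variable {G : SimpleGraph σ}

lemma IsEdgeSum.exists_eq_edgeExp_add {t : ℕ} {e : σ →₀ ℕ} (h : IsEdgeSum G t e) {i : σ}
    (hi : e i ≠ 0) :
    ∃ s c f, t = s + 1 ∧ G.Adj i c ∧ IsEdgeSum G s f ∧ e = edgeExp i c + f := by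
  induction h with
  | zero => exact absurd rfl hi
  | @add t a b f hab hf ih =>
    by_cases ha : i = a
    · subst ha
      exact ⟨t, b, f, rfl, hab, hf, rfl⟩
    by_cases hb : i = b
    · subst hb
      exact ⟨t, a, f, rfl, hab.symm, hf, by rw [edgeExp_comm]⟩
    have hfi : f i ≠ 0 := by
      have : edgeExp a b i = 0 := by
        by_contra h
        exact (edgeExp_apply_ne_zero_iff.mp h).elim ha hb
      simpa [this] using hi
    obtain ⟨s, c, g, rfl, hic, hg, rfl⟩ := ih hfi
    exact ⟨s + 1, c, edgeExp a b + g, rfl, hic, .add hab hg, add_left_comm _ _ _⟩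

lemma exists_adj_edgeExp_add_le_of_ne_zero
    (hG : ∀ i j, G.Adj i j → ∀ k, G.Adj i k ∨ G.Adj j k) {i j : σ} (hij : G.Adj i j) {t : ℕ}
    {d e : σ →₀ ℕ} (hdj : single j 1 ≤ d) (he : IsEdgeSum ⊤ (t + 1) e) (hed : e ≤ d)
    (hi : e i ≠ 0) : ∃ a b f, G.Adj a b ∧ IsEdgeSum ⊤ t f ∧ edgeExp a b + f ≤ d := by
  obtain ⟨_, c, f, hs, hic, hf, rfl⟩ := he.exists_eq_edgeExp_add hi
  obtain rfl := Nat.succ_injective hs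
  by_cases hGic : G.Adj i c
  · exact ⟨i, c, f, hGic, hf, hed⟩
  have hGjc : G.Adj j c := (hG i j hij c).resolve_left hGic
  by_cases hj : f j = 0
  · refine ⟨j, c, f, hGjc, hf, ?_⟩
    rw [edgeExp, add_assoc]
    refine single_add_le_of_apply_eq_zero hdj
      ((add_le_add (single_le_edgeExp_right i c) le_rfl).trans hed) ?_
    simp [hj, single_eq_of_ne hGjc.ne]
  obtain ⟨s, c', g, rfl, -, hg, rfl⟩ := hf.exists_eq_edgeExp_add hj
  by_cases hc' : c' = i
  · subst hc'
    refine ⟨c', j, edgeExp c' c + g, hij, .add hic hg, le_of_eq_of_le ?_ hed⟩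
    rw [edgeExp_comm j c', add_left_comm]
  · refine ⟨j, c, edgeExp i c' + g, hGjc, .add (Ne.symm hc') hg, le_of_eq_of_le ?_ hed⟩
    simp only [edgeExp]
    abel

lemma exists_adj_edgeExp_add_le (hG : ∀ i j, G.Adj i j → ∀ k, G.Adj i k ∨ G.Adj j k)
    {i j : σ} (hij : G.Adj i j) {t : ℕ} {d e : σ →₀ ℕ} (hd : edgeExp i j ≤ d)
    (he : IsEdgeSum ⊤ (t + 1) e) (hed : e ≤ d) :
    ∃ a b f, G.Adj a b ∧ IsEdgeSum ⊤ t f ∧ edgeExp a b + f ≤ d := by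
  have hdi := (single_le_edgeExp_left i j).trans hd
  have hdj := (single_le_edgeExp_right i j).trans hd
  by_cases hi : e i ≠ 0
  · exact exists_adj_edgeExp_add_le_of_ne_zero hG hij hdj he hed hi
  by_cases hj : e j ≠ 0
  · exact exists_adj_edgeExp_add_le_of_ne_zero hG hij.symm hdi he hed hj
  obtain _ | @⟨_, _, _, f, -, hf⟩ := he
  refine ⟨i, j, f, hij, hf, ?_⟩
  have hfi : f i = 0 := (add_eq_zero.mp (not_not.mp hi)).2
  have hfj : f j = 0 := (add_eq_zero.mp (not_not.mp hj)).2
  have hfd : f ≤ d := le_add_self.trans hed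
  rw [edgeExp, add_assoc]
  refine single_add_le_of_apply_eq_zero hdi (single_add_le_of_apply_eq_zero hdj hfd hfj) ?_
  simp [hfi, single_eq_of_ne hij.ne]

lemma not_edgeExp_add_edgeExp_le {i j k a b c c' : σ} (hik : i ≠ k) (hjk : j ≠ k)
    (hGik : ¬G.Adj i k) (hGjk : ¬G.Adj j k) (hab : G.Adj a b) (hcc' : c ≠ c') :
    ¬edgeExp a b + edgeExp c c' ≤ edgeExp i k + edgeExp j k := by
  intro hle
  -- both sides have degree 4
  have h := eq_of_le_of_degree_le hle (by simp only [map_add, degree_edgeExp, le_refl])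
  clear hle
  have hk : edgeExp a b k ≠ 0 := by
    have hk := congr($h k)
    have := edgeExp_apply_le_one hcc' k
    simp only [Finsupp.add_apply, edgeExp_apply_right hik, edgeExp_apply_right hjk] at hk
    omega
  wlog hak : k = a generalizing a b
  · exact this hab.symm (by rwa [edgeExp_comm]) (by rwa [edgeExp_comm])
      ((edgeExp_apply_ne_zero_iff.mp hk).resolve_left hak)
  subst hak
  have hb : (edgeExp i k + edgeExp j k) b ≠ 0 := by
    rw [← h]
    simp [edgeExp]
  rw [Finsupp.add_apply, ne_eq, add_eq_zero, not_and_or, ← ne_eq, ← ne_eq,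
    edgeExp_apply_ne_zero_iff, edgeExp_apply_ne_zero_iff] at hb
  rcases hb with (rfl | rfl) | (rfl | rfl)
  · exact hGik hab.symm
  · exact hab.ne rfl
  · exact hGjk hab.symm
  · exact hab.ne rfl

end Combinatorics

lemma MvPolynomial.monomial_mem_ideal_span_monomial_image {σ R : Type*} [CommSemiring R]
    [Nontrivial R] {d : σ →₀ ℕ} {s : Set (σ →₀ ℕ)} :
    monomial d (1 : R) ∈ Ideal.span ((fun s => monomial s (1 : R)) '' s) ↔ ∃ si ∈ s, si ≤ d := by
  classical
  simp [mem_ideal_span_monomial_image, support_monomial]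

lemma MvPolynomial.span_monomial_image_mul {σ R : Type*} [CommSemiring R]
    (S T : Set (σ →₀ ℕ)) :
    Ideal.span ((fun s => monomial s (1 : R)) '' S) *
        Ideal.span ((fun s => monomial s (1 : R)) '' T) =
      Ideal.span ((fun s => monomial s (1 : R)) '' (S + T)) := by
  rw [Ideal.span_mul_span', ← Set.image2_add, ← Set.image2_mul,
    Set.image_image2_distrib (f' := (· * ·)) fun a b => by rw [monomial_mul, one_mul]]

section EdgeIdeal

variable (K : Type) [Field K] {n : ℕ}

lemma edgeIdeal_mono {G H : SimpleGraph (Fin n)} (h : G ≤ H) : edgeIdeal K G ≤ edgeIdeal K H :=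
  Ideal.span_mono fun _ ⟨i, j, hij, hp⟩ => ⟨i, j, h hij, hp⟩

lemma edgeIdeal_eq_span (G : SimpleGraph (Fin n)) :
    edgeIdeal K G = Ideal.span ((fun s => monomial s (1 : K)) '' edgeExpSet G) := by
  unfold edgeIdeal
  congr 1
  ext p
  simp only [Set.mem_ofPred_eq, Set.mem_image, X, monomial_mul, one_mul]
  constructor
  · rintro ⟨i, j, hij, rfl⟩
    exact ⟨_, ⟨i, j, hij, rfl⟩, rfl⟩
  · rintro ⟨_, ⟨i, j, hij, rfl⟩, rfl⟩
    exact ⟨i, j, hij, rfl⟩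

lemma edgeIdeal_pow_eq_span (G : SimpleGraph (Fin n)) (t : ℕ) :
    edgeIdeal K G ^ t = Ideal.span ((fun s => monomial s (1 : K)) '' {e | IsEdgeSum G t e}) := by
  induction t with
  | zero =>
    have h0 : {e : Fin n →₀ ℕ | IsEdgeSum G 0 e} = {0} := by
      ext e
      exact ⟨fun h => by cases h; rfl, fun h => h ▸ .zero⟩
    rw [pow_zero, h0, Set.image_singleton, ← one_def, Ideal.span_singleton_one,
      Ideal.one_eq_top]
  | succ t ih =>
    rw [pow_succ', ih, edgeIdeal_eq_span, span_monomial_image_mul, setOf_isEdgeSum_succ]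

lemma edgeIdeal_mul_pow_le_inf (G : SimpleGraph (Fin n)) (t : ℕ) :
    edgeIdeal K G * edgeIdeal K ⊤ ^ t ≤ edgeIdeal K G ⊓ edgeIdeal K ⊤ ^ (t + 1) :=
  le_inf Ideal.mul_le_left
    (pow_succ' (edgeIdeal K ⊤) t ▸ Ideal.mul_mono_left (edgeIdeal_mono K le_top))

lemma edgeIdeal_inf_pow_succ_le_mul_pow {G : SimpleGraph (Fin n)}
    (hG : ∀ i j, G.Adj i j → ∀ k, G.Adj i k ∨ G.Adj j k) (t : ℕ) :
    edgeIdeal K G ⊓ edgeIdeal K ⊤ ^ (t + 1) ≤ edgeIdeal K G * edgeIdeal K ⊤ ^ t := by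
  intro p hp
  obtain ⟨hpJ, hpI⟩ := Ideal.mem_inf.mp hp
  rw [edgeIdeal_eq_span, mem_ideal_span_monomial_image] at hpJ
  rw [edgeIdeal_pow_eq_span, mem_ideal_span_monomial_image] at hpI
  rw [edgeIdeal_eq_span, edgeIdeal_pow_eq_span, span_monomial_image_mul,
    mem_ideal_span_monomial_image]
  intro d hd
  obtain ⟨_, ⟨i, j, hij, rfl⟩, hdJ⟩ := hpJ d hd
  obtain ⟨e, he, hed⟩ := hpI d hd
  obtain ⟨a, b, f, hab, hf, hle⟩ := exists_adj_edgeExp_add_le hG hij hdJ he hed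
  exact ⟨_, Set.add_mem_add ⟨a, b, hab, rfl⟩ hf, hle⟩

lemma not_edgeIdeal_inf_pow_two_le_mul {G : SimpleGraph (Fin n)} {i j k : Fin n}
    (hij : G.Adj i j) (hGik : ¬G.Adj i k) (hGjk : ¬G.Adj j k) :
    ¬edgeIdeal K G ⊓ edgeIdeal K ⊤ ^ 2 ≤ edgeIdeal K G * edgeIdeal K ⊤ ^ 1 := by
  have hik : i ≠ k := fun h => hGjk (h ▸ hij.symm)
  have hjk : j ≠ k := fun h => hGik (h ▸ hij)
  set d := edgeExp i k + edgeExp j k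
  have hJ : monomial d (1 : K) ∈ edgeIdeal K G := by
    rw [edgeIdeal_eq_span, monomial_mem_ideal_span_monomial_image]
    exact ⟨_, ⟨i, j, hij, rfl⟩, add_le_add (single_le_edgeExp_left i k)
      (single_le_edgeExp_left j k)⟩
  have hI : monomial d (1 : K) ∈ edgeIdeal K ⊤ ^ 2 := by
    rw [edgeIdeal_pow_eq_span, monomial_mem_ideal_span_monomial_image]
    exact ⟨d, by simpa [d] using IsEdgeSum.add hik (.add hjk .zero), le_rfl⟩
  intro hle
  have hmem := hle ⟨hJ, hI⟩
  rw [edgeIdeal_eq_span, edgeIdeal_pow_eq_span, span_monomial_image_mul,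
    monomial_mem_ideal_span_monomial_image] at hmem
  obtain ⟨_, ⟨_, ⟨a, b, hab, rfl⟩, f, hf, rfl⟩, hle⟩ := hmem
  obtain _ | ⟨hcc', _ | _⟩ := hf
  exact not_edgeExp_add_edgeExp_le hik hjk hGik hGjk hab hcc' (by simpa using hle)

end EdgeIdeal

/-- Let `G'` be a subgraph of the complete graph `K_n` (i.e. any simple
graph on `[n]`), `J = I(G')` and `I = I(K_n)`.  Then `J ∩ I^t = J·I^{t-1}` for all `t ≥ 1`
iff for every edge `{i,j}` of `G'` one has `N_{G'}(i) ∪ N_{G'}(j) = [n]`. -/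
theorem VV_vanishes_iff_neighbors_cover {K : Type} [Field K] {n : ℕ}
    (G' : SimpleGraph (Fin n)) :
    (∀ t : ℕ, 1 ≤ t →
        edgeIdeal K G' ⊓ (edgeIdeal K (⊤ : SimpleGraph (Fin n))) ^ t =
          edgeIdeal K G' * (edgeIdeal K (⊤ : SimpleGraph (Fin n))) ^ (t - 1)) ↔
      (∀ i j : Fin n, G'.Adj i j →
        G'.neighborSet i ∪ G'.neighborSet j = Set.univ) := by
  simp only [Set.eq_univ_iff_forall, Set.mem_union, SimpleGraph.mem_neighborSet]
  constructor
  · intro h i j hij k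
    by_contra! hk
    exact not_edgeIdeal_inf_pow_two_le_mul K hij hk.1 hk.2 (h 2 one_le_two).le
  · intro hG t ht
    obtain ⟨s, rfl⟩ := Nat.exists_eq_add_of_le' ht
    rw [Nat.add_sub_cancel]
    exact (edgeIdeal_inf_pow_succ_le_mul_pow K hG s).antisymm (edgeIdeal_mul_pow_le_inf K G' s)
end

section
/- Let G be a complete bipartite graph on vertex set [n] = {1,...,n} and G' any subgraph of G, with edge ideals J = I(G') and I = I(G) in K[x_1,...,x_n] over a field K. Then J ∩ I^t = J·I^{t-1} for all t ≥ 1. -/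
open MvPolynomial
open scoped Classical


namespace VVaux

variable {K : Type} [Field K] {n : ℕ}

/-- weighted degree: sum of exponents over a set B -/
noncomputable def dS (B : Set (Fin n)) (m : Fin n →₀ ℕ) : ℕ :=
  m.sum fun i e => if i ∈ B then e else 0

lemma dS_add (B : Set (Fin n)) (m₁ m₂ : Fin n →₀ ℕ) :
    dS B (m₁ + m₂) = dS B m₁ + dS B m₂ := by
  classical
  exact Finsupp.sum_add_index (by intro i _; simp) (by intro i _ a b; split <;> simp)

lemma dS_single (B : Set (Fin n)) (i : Fin n) (e : ℕ) :
    dS B (Finsupp.single i e) = if i ∈ B then e else 0 := by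
  classical
  exact Finsupp.sum_single_index (by simp)

/-- the ideal of polynomials all whose monomials have A-degree and Aᶜ-degree ≥ s -/
noncomputable def V (A : Set (Fin n)) (s : ℕ) : Ideal (MvPolynomial (Fin n) K) where
  carrier := {f | ∀ m ∈ f.support, s ≤ dS A m ∧ s ≤ dS Aᶜ m}
  zero_mem' := by simp
  add_mem' := by
    intro f g hf hg m hm
    classical
    have := MvPolynomial.support_add (p := f) (q := g) hm
    rcases Finset.mem_union.mp this with h | h
    · exact hf m h
    · exact hg m h
  smul_mem' := by
    intro c f hf m hm
    classical
    rw [smul_eq_mul] at hm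
    have := MvPolynomial.support_mul c f hm
    rcases Finset.mem_add.mp this with ⟨m₁, hm₁, m₂, hm₂, rfl⟩
    have h2 := hf m₂ hm₂
    constructor <;> rw [dS_add] <;> omega

lemma mul_mem_V {A : Set (Fin n)} {a b : ℕ} {f g : MvPolynomial (Fin n) K}
    (hf : f ∈ V A a) (hg : g ∈ V A b) : f * g ∈ V A (a + b) := by
  intro m hm
  classical
  have := MvPolynomial.support_mul f g hm
  rcases Finset.mem_add.mp this with ⟨m₁, hm₁, m₂, hm₂, rfl⟩
  have h1 := hf m₁ hm₁
  have h2 := hg m₂ hm₂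
  constructor <;> rw [dS_add] <;> omega

variable (A : Set (Fin n))

noncomputable def PId (B : Set (Fin n)) : Ideal (MvPolynomial (Fin n) K) :=
  Ideal.span ((fun i => (X i : MvPolynomial (Fin n) K)) '' B)

lemma monomial_mem_PId_pow (B : Set (Fin n)) (s : ℕ) :
    ∀ (m : Fin n →₀ ℕ), (∀ i ∈ m.support, i ∈ B) → s ≤ dS B m → ∀ c : K,
      monomial m c ∈ (PId B : Ideal (MvPolynomial (Fin n) K)) ^ s := by
  induction s with
  | zero => intro m _ _ c; simp
  | succ s ih =>
    intro m hsupp hd c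
    have hm0 : m ≠ 0 := by
      rintro rfl
      simp [dS] at hd
    obtain ⟨i, hi⟩ := Finsupp.support_nonempty_iff.mpr hm0
    have hiB : i ∈ B := hsupp i hi
    have hmi : 1 ≤ m i := Nat.one_le_iff_ne_zero.mpr (Finsupp.mem_support_iff.mp hi)
    set m' := m - Finsupp.single i 1 with hm'
    have hsum : Finsupp.single i 1 + m' = m := by
      ext j
      rw [Finsupp.add_apply, hm', Finsupp.tsub_apply]
      by_cases hj : j = i
      · subst hj; simp; omega
      · simp [Finsupp.single_eq_of_ne' (Ne.symm hj)]
    have hdm : dS B m = dS B m' + 1 := by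
      rw [← hsum, dS_add, dS_single, if_pos hiB]; ring
    have hsupp' : ∀ j ∈ m'.support, j ∈ B := fun j hj => hsupp j (Finsupp.support_tsub hj)
    have hmem' := ih m' hsupp' (by omega) c
    have hX : (X i : MvPolynomial (Fin n) K) ∈ PId B :=
      Ideal.subset_span ⟨i, hiB, rfl⟩
    have : monomial m c = X i * monomial m' c := by
      rw [X, monomial_mul, one_mul, hsum]
    rw [this, pow_succ, mul_comm ((PId B : Ideal (MvPolynomial (Fin n) K)) ^ s)]
    exact Ideal.mul_mem_mul hX hmem'

end VVaux

namespace VVaux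

variable {K : Type} [Field K] {n : ℕ} {A : Set (Fin n)} {G : SimpleGraph (Fin n)}
variable (hG : ∀ i j : Fin n, G.Adj i j ↔ ((i ∈ A ∧ j ∉ A) ∨ (i ∉ A ∧ j ∈ A)))

include hG

/-- P*Q ≤ I for the complete bipartite graph -/
lemma PQ_le_I : (PId A : Ideal (MvPolynomial (Fin n) K)) * PId Aᶜ ≤ edgeIdeal K G := by
  rw [PId, PId, Ideal.span_mul_span']
  apply Ideal.span_le.mpr
  rintro p ⟨x, ⟨a, haA, rfl⟩, y, ⟨b, hbA, rfl⟩, rfl⟩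
  exact Ideal.subset_span ⟨a, b, (hG a b).mpr (Or.inl ⟨haA, hbA⟩), rfl⟩

/-- a monomial with both weighted degrees ≥ s lies in I^s -/
lemma monomial_mem_I_pow (s : ℕ) (m : Fin n →₀ ℕ) (hdA : s ≤ dS A m)
    (hdB : s ≤ dS Aᶜ m) (c : K) : monomial m c ∈ (edgeIdeal K G) ^ s := by
  classical
  set mA := m.filter (fun i => i ∈ A) with hmA
  set mB := m.filter (fun i => i ∉ A) with hmB
  have hsplit : mA + mB = m := Finsupp.filter_pos_add_filter_neg m _
  have hAsupp : ∀ i ∈ mA.support, i ∈ A := by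
    intro i hi
    rw [hmA, Finsupp.support_filter, Finset.mem_filter] at hi
    exact hi.2
  have hBsupp : ∀ i ∈ mB.support, i ∈ Aᶜ := by
    intro i hi
    rw [hmB, Finsupp.support_filter, Finset.mem_filter] at hi
    exact hi.2
  have hdegA : dS A m = dS A mA := by
    rw [← hsplit, dS_add]
    have : dS A mB = 0 := by
      rw [dS, Finsupp.sum]
      apply Finset.sum_eq_zero
      intro i hi
      exact if_neg (hBsupp i hi)
    omega
  have hdegB : dS Aᶜ m = dS Aᶜ mB := by
    rw [← hsplit, dS_add]
    have : dS Aᶜ mA = 0 := by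
      rw [dS, Finsupp.sum]
      apply Finset.sum_eq_zero
      intro i hi
      exact if_neg (by simpa using hAsupp i hi)
    omega
  have h1 := monomial_mem_PId_pow (K := K) A s mA hAsupp (by omega) c
  have h2 := monomial_mem_PId_pow (K := K) Aᶜ s mB hBsupp (by omega) (1 : K)
  have hmul : monomial m c = monomial mA c * monomial mB 1 := by
    rw [monomial_mul, mul_one, hsplit]
  have hmem : monomial m c ∈ ((PId A : Ideal (MvPolynomial (Fin n) K)) * PId Aᶜ) ^ s := by
    rw [hmul, mul_pow]
    exact Ideal.mul_mem_mul h1 h2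
  exact pow_le_pow_left' (PQ_le_I hG) s hmem

/-- membership in `V` gives membership in `I^s` -/
lemma mem_V_imp_mem_I_pow (s : ℕ) (f : MvPolynomial (Fin n) K)
    (hf : ∀ m ∈ f.support, s ≤ dS A m ∧ s ≤ dS Aᶜ m) : f ∈ (edgeIdeal K G) ^ s := by
  rw [← support_sum_monomial_coeff f]
  exact Ideal.sum_mem _ fun m hm =>
    monomial_mem_I_pow hG s m (hf m hm).1 (hf m hm).2 _

/-- I ≤ V 1 -/
lemma I_le_V1 : edgeIdeal K G ≤ (V A 1 : Ideal (MvPolynomial (Fin n) K)) := by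
  apply Ideal.span_le.mpr
  rintro p ⟨i, j, hij, rfl⟩ m hm
  classical
  have : (X i * X j : MvPolynomial (Fin n) K) =
      monomial (Finsupp.single i 1 + Finsupp.single j 1) 1 := by
    rw [X, X, monomial_mul, one_mul]
  rw [this] at hm
  have hne : i ≠ j := by
    intro hh; subst hh; rcases (hG i i).mp hij with ⟨h1, h2⟩ | ⟨h1, h2⟩ <;> first | exact h2 h1 | exact h1 h2
  have : m = Finsupp.single i 1 + Finsupp.single j 1 := by
    by_contra hne'
    rw [MvPolynomial.mem_support_iff, coeff_monomial, if_neg (fun hh => hne' hh.symm)] at hm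
    exact hm rfl
  subst this
  rw [dS_add, dS_add, dS_single, dS_single, dS_single, dS_single]
  have hmem := (hG i j).mp hij
  constructor <;> split_ifs with p q <;>
    simp_all [Set.mem_compl_iff] <;> omega

/-- I^t ≤ V t -/
lemma I_pow_le_V (t : ℕ) : (edgeIdeal K G) ^ t ≤ (V A t : Ideal (MvPolynomial (Fin n) K)) := by
  induction t with
  | zero => intro f _ m _; simp
  | succ t ih =>
    rw [pow_succ]
    intro f hf
    refine Submodule.mul_induction_on hf (fun a ha b hb => ?_) (fun a b ha hb m hm => ?_)
    · exact mul_mem_V (ih ha) (I_le_V1 hG hb)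
    · classical
      have := MvPolynomial.support_add (p := a) (q := b) hm
      rcases Finset.mem_union.mp this with h | h
      · exact ha m h
      · exact hb m h

end VVaux

namespace VVaux

variable {K : Type} [Field K] {n : ℕ}

/-- truncation to monomials with both weighted degrees ≥ s -/
noncomputable def Φ (A : Set (Fin n)) (s : ℕ) (f : MvPolynomial (Fin n) K) :
    MvPolynomial (Fin n) K :=
  AddMonoidAlgebra.ofCoeff (Finsupp.filter (fun m => s ≤ dS A m ∧ s ≤ dS Aᶜ m) (AddMonoidAlgebra.coeff f))

lemma coeff_Φ (A : Set (Fin n)) (s : ℕ) (f : MvPolynomial (Fin n) K) (m : Fin n →₀ ℕ) :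
    coeff m (Φ A s f) = if s ≤ dS A m ∧ s ≤ dS Aᶜ m then coeff m f else 0 :=
  rfl

lemma Φ_add (A : Set (Fin n)) (s : ℕ) (f g : MvPolynomial (Fin n) K) :
    Φ A s (f + g) = Φ A s f + Φ A s g := by
  ext m
  simp only [coeff_Φ, coeff_add]
  split <;> simp

lemma Φ_mem_V (A : Set (Fin n)) (s : ℕ) (f : MvPolynomial (Fin n) K) :
    ∀ m ∈ (Φ A s f).support, s ≤ dS A m ∧ s ≤ dS Aᶜ m := by
  intro m hm
  rw [MvPolynomial.mem_support_iff, coeff_Φ] at hm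
  by_contra hc
  rw [if_neg hc] at hm
  exact hm rfl

lemma Φ_shift {A : Set (Fin n)} {a b : Fin n} (ha : a ∈ A) (hb : b ∉ A)
    {t : ℕ} (ht : 1 ≤ t) (p : MvPolynomial (Fin n) K) :
    Φ A t (p * (X a * X b)) = Φ A (t - 1) p * (X a * X b) := by
  classical
  set u := Finsupp.single a 1 + Finsupp.single b 1 with hu
  have hXX : (X a * X b : MvPolynomial (Fin n) K) = monomial u 1 := by
    rw [X, X, monomial_mul, one_mul]
  have hdAu : dS A u = 1 := by
    rw [hu, dS_add, dS_single, dS_single, if_pos ha, if_neg hb]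
  have hdBu : dS Aᶜ u = 1 := by
    rw [hu, dS_add, dS_single, dS_single,
      if_neg (by simpa using ha), if_pos (by simpa using hb)]
  ext m
  rw [coeff_Φ, hXX, coeff_mul_monomial', coeff_mul_monomial', coeff_Φ]
  by_cases hum : u ≤ m
  · rw [if_pos hum, if_pos hum]
    have hsum : (m - u) + u = m := tsub_add_cancel_of_le hum
    have hdA : dS A m = dS A (m - u) + 1 := by conv_lhs => rw [← hsum, dS_add, hdAu]
    have hdB : dS Aᶜ m = dS Aᶜ (m - u) + 1 := by conv_lhs => rw [← hsum, dS_add, hdBu]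
    have hiff : (t ≤ dS A m ∧ t ≤ dS Aᶜ m) ↔
        (t - 1 ≤ dS A (m - u) ∧ t - 1 ≤ dS Aᶜ (m - u)) := by omega
    by_cases hp : t ≤ dS A m ∧ t ≤ dS Aᶜ m
    · rw [if_pos hp, if_pos (hiff.mp hp)]
    · rw [if_neg hp, if_neg (fun hq => hp (hiff.mpr hq))]; ring
  · rw [if_neg hum, if_neg hum, ite_self]

end VVaux

/-- Let `G` be a complete bipartite graph on `[n]` (with parts `A` and
`Aᶜ`, both nonempty, and edges exactly the pairs with one endpoint in each part) and `G'`
any subgraph of `G`.  With `J = I(G')` and `I = I(G)` one has `J ∩ I^t = J·I^{t-1}` for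
all `t ≥ 1`, i.e. the Valabrega–Valla module `VV_{J ⊆ I}` vanishes. -/
theorem VV_vanishes_complete_bipartite {K : Type} [Field K] {n : ℕ}
    (G G' : SimpleGraph (Fin n))
    (A : Set (Fin n)) (hA : A.Nonempty) (hAc : Aᶜ.Nonempty)
    (hG : ∀ i j : Fin n, G.Adj i j ↔ ((i ∈ A ∧ j ∉ A) ∨ (i ∉ A ∧ j ∈ A)))
    (h : G' ≤ G) :
    ∀ t : ℕ, 1 ≤ t →
      edgeIdeal K G' ⊓ (edgeIdeal K G) ^ t = edgeIdeal K G' * (edgeIdeal K G) ^ (t - 1) := by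
  intro t ht
  set I := edgeIdeal K G with hI
  set J := edgeIdeal K G' with hJ
  have hJI : J ≤ I := by
    apply Ideal.span_le.mpr
    rintro p ⟨i, j, hij, rfl⟩
    exact Ideal.subset_span ⟨i, j, h hij, rfl⟩
  apply le_antisymm
  · intro f hf
    obtain ⟨hfJ, hfI⟩ := Submodule.mem_inf.mp hf
    have hfix : VVaux.Φ A t f = f := by
      ext m
      rw [VVaux.coeff_Φ]
      split
      · rfl
      · next hc =>
        by_contra hne
        have hm : m ∈ f.support := MvPolynomial.mem_support_iff.mpr (fun h0 => hne h0.symm)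
        exact hc (VVaux.I_pow_le_V hG t hfI m hm)
    rw [← hfix]
    have key : ∀ (g : MvPolynomial (Fin n) K), g ∈ J →
        ∀ r : MvPolynomial (Fin n) K, VVaux.Φ A t (r * g) ∈ J * I ^ (t - 1) := by
      intro g hg
      refine Submodule.span_induction ?_ ?_ ?_ ?_ hg
      · rintro x ⟨i, j, hij, rfl⟩ r
        have h4 : VVaux.Φ A (t - 1) r ∈ I ^ (t - 1) :=
          VVaux.mem_V_imp_mem_I_pow hG (t - 1) _ (VVaux.Φ_mem_V A (t - 1) r)
        rcases (hG i j).mp (h hij) with ⟨h1, h2⟩ | ⟨h1, h2⟩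
        · rw [VVaux.Φ_shift h1 h2 ht r]
          have hXJ : (X i * X j : MvPolynomial (Fin n) K) ∈ J :=
            Ideal.subset_span ⟨i, j, hij, rfl⟩
          have hm := Ideal.mul_mem_mul hXJ h4
          rwa [mul_comm (X i * X j) (VVaux.Φ A (t - 1) r)] at hm
        · rw [mul_comm (X i) (X j), VVaux.Φ_shift h2 h1 ht r]
          have hXJ : (X j * X i : MvPolynomial (Fin n) K) ∈ J :=
            Ideal.subset_span ⟨j, i, hij.symm, rfl⟩
          have hm := Ideal.mul_mem_mul hXJ h4
          rwa [mul_comm (X j * X i) (VVaux.Φ A (t - 1) r)] at hm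
      · intro r
        have h0 : VVaux.Φ A t (r * 0) = 0 := by
          ext m; rw [VVaux.coeff_Φ]; simp
        rw [h0]
        exact Submodule.zero_mem _
      · intro x y _ _ px py r
        rw [mul_add, VVaux.Φ_add]
        exact Ideal.add_mem _ (px r) (py r)
      · intro c x _ px r
        rw [smul_eq_mul, ← mul_assoc]
        exact px (r * c)
    have := key f hfJ 1
    rwa [one_mul] at this
  · refine le_inf Ideal.mul_le_left ?_
    calc J * I ^ (t - 1) ≤ I * I ^ (t - 1) := Ideal.mul_mono_left hJI
      _ = I ^ t := by
        conv_rhs => rw [show t = t - 1 + 1 from by omega]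
        rw [pow_succ, mul_comm]
end

section
/- Let C be a complete d-partite d-uniform clutter on vertex set [n] and C' ⊆ C any subclutter, with facet ideals J = I(C') and I = I(C) in K[x_1,...,x_n] over a field K. Then J ∩ I^t = J·I^{t-1} for all t ≥ 1 (i.e., the Valabrega-Valla module VV_{I(C')⊆I(C)} vanishes). -/
/-!
For a complete `d`-partite clutter with parts `V_1, …, V_d`, a monomial `x^m` lies in `I^t`
exactly when `m` has degree at least `t` on every part: a product of `t` circuits has degree `t`
on each part, and conversely one peels off a circuit by picking one vertex of positive exponent
in each part. If moreover `x_F ∣ x^m` for some circuit `F`, then `x^m / x_F` still has degree at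
least `t - 1` on every part, so `x^m ∈ I(C') · I^{t-1}`. Since all ideals involved are monomial,
this is enough.
-/

/-- The facet ideal of a clutter `C` on `[n]`: the ideal of `K[x_1,…,x_n]` generated by
the squarefree monomials `x_F = ∏_{i ∈ F} x_i` for `F ∈ C`. -/
noncomputable def facetIdeal (K : Type) [Field K] {n : ℕ} (C : Set (Finset (Fin n))) :
    Ideal (MvPolynomial (Fin n) K) :=
  Ideal.span {p | ∃ F ∈ C, p = ∏ i ∈ F, MvPolynomial.X i}

open MvPolynomial Finset Pointwise

theorem span_monomial_mul_span_monomial {σ R : Type*} [CommSemiring R] (A B : Set (σ →₀ ℕ)) :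
    Ideal.span ((fun s => monomial s (1 : R)) '' A) *
        Ideal.span ((fun s => monomial s (1 : R)) '' B) =
      Ideal.span ((fun s => monomial s (1 : R)) '' (A + B)) := by
  rw [Ideal.span_mul_span', ← Set.image2_mul, Set.image2_image_left, Set.image2_image_right,
    ← Set.image2_add, Set.image_image2]
  congr 1
  exact Set.image2_congr fun a _ b _ => by rw [monomial_mul, one_mul]

variable {K : Type} [Field K] {n : ℕ}

noncomputable def squarefreeExponent (F : Finset (Fin n)) : Fin n →₀ ℕ :=
  ∑ i ∈ F, Finsupp.single i 1

theorem squarefreeExponent_apply (F : Finset (Fin n)) (v : Fin n) :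
    squarefreeExponent F v = if v ∈ F then 1 else 0 := by
  simp [squarefreeExponent, Finsupp.finsetSum_apply, Finsupp.single_apply]

theorem prod_X_eq_monomial_squarefreeExponent (F : Finset (Fin n)) :
    ∏ i ∈ F, (X i : MvPolynomial (Fin n) K) = monomial (squarefreeExponent F) 1 := by
  rw [squarefreeExponent, monomial_sum_one]
  rfl

theorem facetIdeal_eq_span_monomial (C : Set (Finset (Fin n))) :
    facetIdeal K C =
      Ideal.span ((fun s => monomial s (1 : K)) '' (squarefreeExponent '' C)) := by
  rw [facetIdeal, Set.image_image]
  congr 1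
  ext p
  simp [prod_X_eq_monomial_squarefreeExponent, eq_comm]

theorem facetIdeal_mono {C C' : Set (Finset (Fin n))} (h : C' ⊆ C) :
    facetIdeal K C' ≤ facetIdeal K C :=
  Ideal.span_mono fun _ ⟨F, hF, hp⟩ => ⟨F, h hF, hp⟩

section CompleteMultipartite

variable {d : ℕ} (V : Fin d → Finset (Fin n))

def completeMultipartite : Set (Finset (Fin n)) :=
  {F | F.card = d ∧ ∀ i, (F ∩ V i).card = 1}

def partDegree (m : Fin n →₀ ℕ) (i : Fin d) : ℕ :=
  ∑ v ∈ V i, m v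

def partDegreeAtLeast (t : ℕ) : Set (Fin n →₀ ℕ) :=
  {m | ∀ i, t ≤ partDegree V m i}

variable {V}

theorem partDegree_add (m m' : Fin n →₀ ℕ) (i : Fin d) :
    partDegree V (m + m') i = partDegree V m i + partDegree V m' i :=
  sum_add_distrib

theorem partDegree_tsub {m m' : Fin n →₀ ℕ} (h : m' ≤ m) (i : Fin d) :
    partDegree V (m - m') i = partDegree V m i - partDegree V m' i :=
  sum_tsub_distrib _ fun v _ => h v

theorem partDegree_mono {m m' : Fin n →₀ ℕ} (h : m' ≤ m) (i : Fin d) :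
    partDegree V m' i ≤ partDegree V m i :=
  sum_le_sum fun v _ => h v

theorem partDegree_squarefreeExponent (F : Finset (Fin n)) (i : Fin d) :
    partDegree V (squarefreeExponent F) i = (F ∩ V i).card := by
  simp [partDegree, squarefreeExponent_apply, inter_comm]

theorem partDegree_squarefreeExponent_of_mem {F : Finset (Fin n)}
    (hF : F ∈ completeMultipartite V) (i : Fin d) :
    partDegree V (squarefreeExponent F) i = 1 := by
  rw [partDegree_squarefreeExponent, hF.2 i]

theorem tsub_squarefreeExponent_mem_partDegreeAtLeast {F : Finset (Fin n)}
    {m : Fin n →₀ ℕ} {t : ℕ} (hF : F ∈ completeMultipartite V)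
    (hFm : squarefreeExponent F ≤ m) (hm : m ∈ partDegreeAtLeast V (t + 1)) :
    m - squarefreeExponent F ∈ partDegreeAtLeast V t := fun i => by
  have := hm i
  rw [partDegree_tsub hFm, partDegree_squarefreeExponent_of_mem hF]
  omega

variable (hdisj : ∀ i j, i ≠ j → Disjoint (V i) (V j))
include hdisj

theorem image_mem_completeMultipartite {f : Fin d → Fin n} (hf : ∀ i, f i ∈ V i) :
    univ.image f ∈ completeMultipartite V := by
  have hinter : ∀ i, univ.image f ∩ V i = {f i} := by
    intro i
    ext v
    simp only [mem_inter, mem_image, mem_univ, true_and, mem_singleton]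
    constructor
    · rintro ⟨⟨j, rfl⟩, hj⟩
      by_contra hji
      exact disjoint_left.mp (hdisj j i fun h => hji (h ▸ rfl)) (hf j) hj
    · rintro rfl
      exact ⟨⟨i, rfl⟩, hf i⟩
  have hinj : Function.Injective f := fun i j hij => by
    by_contra hne
    exact disjoint_left.mp (hdisj i j hne) (hf i) (hij ▸ hf j)
  refine ⟨?_, fun i => by rw [hinter, card_singleton]⟩
  rw [card_image_of_injective _ hinj, card_univ, Fintype.card_fin]

theorem exists_mem_completeMultipartite_le {m : Fin n →₀ ℕ}
    (hm : ∀ i, 1 ≤ partDegree V m i) :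
    ∃ F ∈ completeMultipartite V, squarefreeExponent F ≤ m := by
  have hpos : ∀ i, ∃ v ∈ V i, m v ≠ 0 := fun i =>
    exists_ne_zero_of_sum_ne_zero (Nat.one_le_iff_ne_zero.mp (hm i))
  choose f hfV hfm using hpos
  refine ⟨univ.image f, image_mem_completeMultipartite hdisj hfV, fun v => ?_⟩
  rw [squarefreeExponent_apply]
  split_ifs with hv
  · obtain ⟨i, -, rfl⟩ := mem_image.mp hv
    exact Nat.one_le_iff_ne_zero.mpr (hfm i)
  · exact Nat.zero_le _

end CompleteMultipartite

section Powers

variable {d : ℕ} {V : Fin d → Finset (Fin n)}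

theorem monomial_squarefreeExponent_mem_facetIdeal {C : Set (Finset (Fin n))}
    {F : Finset (Fin n)} (hF : F ∈ C) :
    monomial (squarefreeExponent F) (1 : K) ∈ facetIdeal K C :=
  Ideal.subset_span ⟨F, hF, (prod_X_eq_monomial_squarefreeExponent F).symm⟩

theorem span_partDegreeAtLeast_mul_le (a b : ℕ) :
    Ideal.span ((fun s => monomial s (1 : K)) '' partDegreeAtLeast V a) *
        Ideal.span ((fun s => monomial s (1 : K)) '' partDegreeAtLeast V b) ≤
      Ideal.span ((fun s => monomial s (1 : K)) '' partDegreeAtLeast V (a + b)) := by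
  rw [span_monomial_mul_span_monomial]
  refine Ideal.span_mono (Set.image_mono ?_)
  rintro _ ⟨m, hm, m', hm', rfl⟩ i
  rw [partDegree_add]
  exact Nat.add_le_add (hm i) (hm' i)

theorem facetIdeal_pow_le_span_partDegreeAtLeast (t : ℕ) :
    facetIdeal K (completeMultipartite V) ^ t ≤
      Ideal.span ((fun s => monomial s (1 : K)) '' partDegreeAtLeast V t) := by
  induction t with
  | zero =>
    rw [pow_zero, Ideal.one_eq_top, top_le_iff, Ideal.eq_top_iff_one, ← C_1, ← monomial_zero']
    exact Ideal.subset_span ⟨0, fun i => Nat.zero_le _, rfl⟩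
  | succ t ih =>
    rw [pow_succ', add_comm]
    refine (Ideal.mul_mono ?_ ih).trans (span_partDegreeAtLeast_mul_le 1 t)
    rw [facetIdeal_eq_span_monomial]
    refine Ideal.span_mono (Set.image_mono ?_)
    rintro _ ⟨F, hF, rfl⟩ i
    rw [partDegree_squarefreeExponent_of_mem hF]

variable (hdisj : ∀ i j, i ≠ j → Disjoint (V i) (V j))
include hdisj

theorem span_partDegreeAtLeast_le_facetIdeal_pow (t : ℕ) :
    Ideal.span ((fun s => monomial s (1 : K)) '' partDegreeAtLeast V t) ≤
      facetIdeal K (completeMultipartite V) ^ t := by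
  induction t with
  | zero => simp
  | succ t ih =>
    rw [Ideal.span_le]
    rintro _ ⟨m, hm, rfl⟩
    dsimp only
    obtain ⟨F, hF, hFm⟩ :=
      exists_mem_completeMultipartite_le hdisj fun i => le_of_add_le_right (hm i)
    have hsplit : monomial m (1 : K) =
        monomial (squarefreeExponent F) 1 * monomial (m - squarefreeExponent F) 1 := by
      rw [monomial_mul, one_mul, add_tsub_cancel_of_le hFm]
    rw [hsplit, pow_succ']
    exact Ideal.mul_mem_mul (monomial_squarefreeExponent_mem_facetIdeal hF)
      (ih (Ideal.subset_span ⟨_, tsub_squarefreeExponent_mem_partDegreeAtLeast hF hFm hm, rfl⟩))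

theorem facetIdeal_completeMultipartite_pow (t : ℕ) :
    facetIdeal K (completeMultipartite V) ^ t =
      Ideal.span ((fun s => monomial s (1 : K)) '' partDegreeAtLeast V t) :=
  le_antisymm (facetIdeal_pow_le_span_partDegreeAtLeast t)
    (span_partDegreeAtLeast_le_facetIdeal_pow hdisj t)

theorem facetIdeal_inf_pow_succ_le {C' : Set (Finset (Fin n))}
    (hC' : C' ⊆ completeMultipartite V) (t : ℕ) :
    facetIdeal K C' ⊓ facetIdeal K (completeMultipartite V) ^ (t + 1) ≤
      facetIdeal K C' * facetIdeal K (completeMultipartite V) ^ t := by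
  rw [facetIdeal_completeMultipartite_pow hdisj, facetIdeal_completeMultipartite_pow hdisj,
    facetIdeal_eq_span_monomial, span_monomial_mul_span_monomial]
  rintro x ⟨hxJ, hxI⟩
  rw [SetLike.mem_coe, mem_ideal_span_monomial_image] at hxJ hxI
  rw [mem_ideal_span_monomial_image]
  intro m hm
  obtain ⟨_, ⟨F, hF, rfl⟩, hFm⟩ := hxJ m hm
  obtain ⟨s, hs, hsm⟩ := hxI m hm
  have hm' : m ∈ partDegreeAtLeast V (t + 1) := fun i => (hs i).trans (partDegree_mono hsm i)
  exact ⟨_, Set.add_mem_add ⟨F, hF, rfl⟩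
    (tsub_squarefreeExponent_mem_partDegreeAtLeast (hC' hF) hFm hm'),
    (add_tsub_cancel_of_le hFm).le⟩

end Powers

/-- Let `C` be a complete `d`-partite `d`-uniform clutter on `[n]`
(with `d`-partition `V_1, …, V_d`: pairwise disjoint, and `C` consists exactly of all
`d`-subsets meeting each `V_i` in exactly one vertex) and `C' ⊆ C` any subclutter.
With `J = I(C')` and `I = I(C)` one has `J ∩ I^t = J·I^{t-1}` for all `t ≥ 1`, i.e. the
Valabrega–Valla module `VV_{I(C') ⊆ I(C)}` vanishes. -/
theorem VV_vanishes_complete_d_partite {K : Type} [Field K] {n d : ℕ}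
    (V : Fin d → Finset (Fin n))
    (hdisj : ∀ i j, i ≠ j → Disjoint (V i) (V j))
    (C C' : Set (Finset (Fin n)))
    (hC : C = {F : Finset (Fin n) | F.card = d ∧ ∀ i, (F ∩ V i).card = 1})
    (hC' : C' ⊆ C) :
    ∀ t : ℕ, 1 ≤ t →
      facetIdeal K C' ⊓ (facetIdeal K C) ^ t =
        facetIdeal K C' * (facetIdeal K C) ^ (t - 1) := by
  rintro t ht
  obtain ⟨t, rfl⟩ := Nat.exists_eq_add_of_le' ht
  rw [Nat.add_sub_cancel]
  change C = completeMultipartite V at hC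
  subst hC
  refine le_antisymm (facetIdeal_inf_pow_succ_le hdisj hC' t) (le_inf Ideal.mul_le_left ?_)
  rw [pow_succ']
  exact Ideal.mul_mono_left (facetIdeal_mono hC')
end

section
/- Let K be a field of characteristic zero, C a d-uniform clutter on vertex set [n], J = I(C) ⊆ K[x_1,...,x_n] its facet ideal, and Θ the Jacobian matrix of the minimal monomial generators of J. Let r be a positive integer. If a monomial u = x_{i_1}^{β_1} ⋯ x_{i_m}^{β_m} (with i_1,...,i_m distinct and all β_j ≥ 1) belongs to the ideal I_r(Θ) of r×r minors of Θ, then α({i_1,...,i_m}) ≥ r. -/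
/-!
Substituting `0` for the variables outside `A = {i_1, …, i_m}` is a ring map fixing `u` and
carrying `I_r(Θ)` into the ideal of `r × r` minors of the substituted Jacobian, so one of those
minors is nonzero, and then so is a term `∏_k ∂x_{F_k}/∂x_{γ_k}` of its Leibniz expansion, with
the `γ_k` distinct. A factor survives the substitution only if `γ_k ∈ F_k` and `F_k ∖ {γ_k} ⊆ A`;
the submaximal circuits `F_k ∖ {γ_k}` then have the `r` vertices `γ_k` among their neighbours.
-/

/-- The ideal `I_r(M)` generated by all `r × r` minors of a matrix `M`. -/
noncomputable def minorsIdeal {R : Type} [CommRing R] {ι κ : Type} (r : ℕ)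
    (M : Matrix ι κ R) : Ideal R :=
  Ideal.span {p | ∃ (ρ : Fin r → ι) (γ : Fin r → κ),
    Function.Injective ρ ∧ Function.Injective γ ∧ p = (M.submatrix ρ γ).det}

/-- The Jacobian matrix of the (minimal monomial) generators `x_F`, `F ∈ C`, of the facet
ideal of a clutter `C`: rows indexed by the circuits, columns by the variables, with
`(F, j)` entry `∂(x_F)/∂x_j`. -/
noncomputable def clutterJacobian (K : Type) [Field K] {n : ℕ}
    (C : Set (Finset (Fin n))) : Matrix C (Fin n) (MvPolynomial (Fin n) K) :=
  Matrix.of fun F j => MvPolynomial.pderiv j (∏ i ∈ (F : Finset (Fin n)), MvPolynomial.X i)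

/-- For a `d`-uniform clutter `C` on `[n]` and `A ⊆ [n]`, `α(A)` is the maximum of
`|N(e_1, …, e_s)|` over all nonempty finite collections `e_1, …, e_s` of submaximal
circuits of `C` (`(d-1)`-subsets `e ⊂ F` of some `F ∈ C`) that are `(d-1)`-subsets of
`A`, where `N(e) = { v : e ∪ {v} ∈ C }` and `N(e_1,…,e_s) = N(e_1) ∪ ⋯ ∪ N(e_s)`. -/
noncomputable def clutterAlpha {n : ℕ} (C : Set (Finset (Fin n))) (d : ℕ)
    (A : Set (Fin n)) : ℕ :=
  sSup {r : ℕ | ∃ E : Finset (Finset (Fin n)), E.Nonempty ∧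
    (∀ e ∈ E, (↑e : Set (Fin n)) ⊆ A ∧ e.card = d - 1 ∧ ∃ F ∈ C, e ⊂ F) ∧
    r = Set.ncard {v : Fin n | ∃ e ∈ E, insert v e ∈ C}}

open MvPolynomial

namespace MvPolynomial

variable {σ R : Type*} [CommSemiring R]

theorem pderiv_prod_X_of_notMem {s : Finset σ} {j : σ} (hj : j ∉ s) :
    pderiv j (∏ i ∈ s, X i : MvPolynomial σ R) = 0 := by
  classical
  induction s using Finset.induction_on with
  | empty => simp
  | insert a s ha ih =>
    rw [Finset.mem_insert, not_or] at hj
    rw [Finset.prod_insert ha, Derivation.leibniz, ih hj.2, pderiv_X_of_ne (Ne.symm hj.1)]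
    simp

theorem pderiv_prod_X [DecidableEq σ] (s : Finset σ) (j : σ) :
    pderiv j (∏ i ∈ s, X i : MvPolynomial σ R) =
      if j ∈ s then ∏ i ∈ s.erase j, X i else 0 := by
  split_ifs with hj
  · rw [← Finset.mul_prod_erase s _ hj, Derivation.leibniz,
      pderiv_prod_X_of_notMem (Finset.notMem_erase j s), pderiv_X_self]
    simp
  · exact pderiv_prod_X_of_notMem hj

theorem mem_and_erase_subset_of_aeval_indicator_pderiv_prod_X_ne_zero [DecidableEq σ]
    {A : Set σ} {s : Finset σ} {j : σ}
    (h : aeval (R := R) (A.indicator X : σ → MvPolynomial σ R) (pderiv j (∏ i ∈ s, X i)) ≠ 0) :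
    j ∈ s ∧ (↑(s.erase j) : Set σ) ⊆ A := by
  rw [pderiv_prod_X] at h
  split_ifs at h with hj
  · refine ⟨hj, fun v hv => ?_⟩
    by_contra hvA
    exact h (by rw [map_prod]; exact Finset.prod_eq_zero hv (by simp [hvA]))
  · exact absurd (map_zero _) h

end MvPolynomial

namespace Matrix

variable {ι R : Type*} [Fintype ι] [DecidableEq ι] [CommRing R]

theorem exists_perm_forall_ne_zero_of_det_ne_zero {M : Matrix ι ι R} (h : M.det ≠ 0) :
    ∃ τ : Equiv.Perm ι, ∀ k, M (τ k) k ≠ 0 := by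
  rw [det_apply] at h
  obtain ⟨τ, -, hτ⟩ := Finset.exists_ne_zero_of_sum_ne_zero h
  exact ⟨τ, fun k hk => hτ (smul_eq_zero_of_right _ (Finset.prod_eq_zero (Finset.mem_univ k) hk))⟩

end Matrix

section minorsIdeal

variable {R S ι κ : Type} [CommRing R] [CommRing S]

theorem map_minorsIdeal_le (f : R →+* S) (r : ℕ) (M : Matrix ι κ R) :
    (minorsIdeal r M).map f ≤ minorsIdeal r (M.map f) := by
  rw [minorsIdeal, Ideal.map_span, Ideal.span_le]
  rintro _ ⟨_, ⟨ρ, γ, hρ, hγ, rfl⟩, rfl⟩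
  exact Ideal.subset_span ⟨ρ, γ, hρ, hγ, by rw [RingHom.map_det, Matrix.submatrix_map]; rfl⟩

theorem exists_minor_ne_zero_of_mem_minorsIdeal {r : ℕ} {M : Matrix ι κ R} {x : R}
    (hx : x ∈ minorsIdeal r M) (hx0 : x ≠ 0) :
    ∃ (ρ : Fin r → ι) (γ : Fin r → κ), Function.Injective ρ ∧ Function.Injective γ ∧
      (M.submatrix ρ γ).det ≠ 0 := by
  by_contra! hzero
  have hbot : minorsIdeal r M = ⊥ := Ideal.span_eq_bot.mpr <| by
    rintro _ ⟨ρ, γ, hρ, hγ, rfl⟩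
    exact hzero ρ γ hρ hγ
  exact hx0 (by simpa [hbot] using hx)

end minorsIdeal

section clutter

variable {n : ℕ} {C : Set (Finset (Fin n))} {d : ℕ}

theorem ncard_le_clutterAlpha {A : Set (Fin n)} {E : Finset (Finset (Fin n))} (hE : E.Nonempty)
    (hEA : ∀ e ∈ E, (↑e : Set (Fin n)) ⊆ A ∧ e.card = d - 1 ∧ ∃ F ∈ C, e ⊂ F) :
    Set.ncard {v : Fin n | ∃ e ∈ E, insert v e ∈ C} ≤ clutterAlpha C d A := by
  refine le_csSup ⟨n, ?_⟩ ⟨E, hE, hEA, rfl⟩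
  rintro _ ⟨E', -, -, rfl⟩
  simpa using Set.ncard_le_card {v : Fin n | ∃ e ∈ E', insert v e ∈ C}

theorem card_le_clutterAlpha_of_erase_subset (hC : ∀ F ∈ C, F.card = d) {A : Set (Fin n)}
    {ι : Type} [Fintype ι] [Nonempty ι] {F : ι → Finset (Fin n)} (hF : ∀ k, F k ∈ C)
    {γ : ι → Fin n} (hγ : Function.Injective γ) (hγF : ∀ k, γ k ∈ F k)
    (hFA : ∀ k, (↑((F k).erase (γ k)) : Set (Fin n)) ⊆ A) :
    Fintype.card ι ≤ clutterAlpha C d A := by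
  classical
  let E := Finset.univ.image fun k => (F k).erase (γ k)
  have hE : ∀ e ∈ E, (↑e : Set (Fin n)) ⊆ A ∧ e.card = d - 1 ∧ ∃ F ∈ C, e ⊂ F := by
    simp only [E, Finset.mem_image, Finset.mem_univ, true_and, forall_exists_index]
    rintro _ k rfl
    exact ⟨hFA k, by rw [Finset.card_erase_of_mem (hγF k), hC _ (hF k)],
      F k, hF k, Finset.erase_ssubset (hγF k)⟩
  have hγN : Set.range γ ⊆ {v | ∃ e ∈ E, insert v e ∈ C} := by
    rintro _ ⟨k, rfl⟩
    exact ⟨_, Finset.mem_image_of_mem _ (Finset.mem_univ k),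
      by rw [Finset.insert_erase (hγF k)]; exact hF k⟩
  calc Fintype.card ι = (Set.range γ).ncard := by
        rw [Set.ncard_range_of_injective hγ, Nat.card_eq_fintype_card]
    _ ≤ _ := Set.ncard_le_ncard hγN
    _ ≤ _ := ncard_le_clutterAlpha (Finset.univ_nonempty.image _) hE

end clutter

theorem alpha_ge_of_monomial_mem_minors_general {K : Type} [Field K] {n d : ℕ}
    (C : Set (Finset (Fin n))) (hC : ∀ F ∈ C, F.card = d)
    (r : ℕ) (hr : 1 ≤ r)
    {m : ℕ} (i : Fin m → Fin n)
    (β : Fin m → ℕ)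
    (hu : (∏ j, MvPolynomial.X (i j) ^ β j) ∈ minorsIdeal r (clutterJacobian K C)) :
    r ≤ clutterAlpha C d (Set.range i) := by
  let φ : MvPolynomial (Fin n) K →+* MvPolynomial (Fin n) K :=
    aeval (R := K) ((Set.range i).indicator X : Fin n → MvPolynomial (Fin n) K)
  have hφu : φ (∏ j, X (i j) ^ β j) = ∏ j, X (i j) ^ β j := by simp [φ]
  have hu0 : (∏ j, X (i j) ^ β j : MvPolynomial (Fin n) K) ≠ 0 :=
    Finset.prod_ne_zero_iff.mpr fun j _ => pow_ne_zero _ (X_ne_zero _)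
  obtain ⟨ρ, γ, -, hγ, hdet⟩ := exists_minor_ne_zero_of_mem_minorsIdeal
    (map_minorsIdeal_le φ r _ (Ideal.mem_map_of_mem φ hu)) (hφu.symm ▸ hu0)
  obtain ⟨τ, hτ⟩ := Matrix.exists_perm_forall_ne_zero_of_det_ne_zero hdet
  have hentry k := mem_and_erase_subset_of_aeval_indicator_pderiv_prod_X_ne_zero (hτ k)
  have : Nonempty (Fin r) := ⟨⟨0, hr⟩⟩
  simpa using card_le_clutterAlpha_of_erase_subset hC (fun k => (ρ (τ k)).2) hγ
    (fun k => (hentry k).1) (fun k => (hentry k).2)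

/-- Let `K` have characteristic zero, `C` a `d`-uniform clutter on
`[n]`, `J = I(C)` its facet ideal with Jacobian matrix `Θ`, and `r ≥ 1`.  If a monomial
`u = x_{i_1}^{β_1} ⋯ x_{i_m}^{β_m}` (the `i_j` distinct, all `β_j ≥ 1`) belongs to
`I_r(Θ)`, then `α({i_1, …, i_m}) ≥ r`. -/
theorem alpha_ge_of_monomial_mem_minors {K : Type} [Field K] [CharZero K] {n d : ℕ}
    (C : Set (Finset (Fin n))) (hC : ∀ F ∈ C, F.card = d)
    (r : ℕ) (hr : 1 ≤ r)
    {m : ℕ} (i : Fin m → Fin n) (hi : Function.Injective i)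
    (β : Fin m → ℕ) (hβ : ∀ j, 1 ≤ β j)
    (hu : (∏ j, MvPolynomial.X (i j) ^ β j) ∈ minorsIdeal r (clutterJacobian K C)) :
    r ≤ clutterAlpha C d (Set.range i) :=
  alpha_ge_of_monomial_mem_minors_general C hC r hr i β hu
end

section
/- Let K be a field of characteristic zero, C a d-uniform clutter on vertex set [n], J = I(C) ⊆ K[x_1,...,x_n] its facet ideal, and Θ the Jacobian matrix of the minimal monomial generators of J. Let 1 < t ≤ d and r ≥ 1 be integers and y_1, ..., y_m (m ≥ d) distinct vertices such that: (i) F = {y_1,...,y_d} ∈ C; (ii) for every (t-1)-element subset B of {y_1,...,y_t}, the set B ∪ {y_{t+1},...,y_m} is independent in C; (iii) α({y_{t+1},...,y_m}) = r - 1. Then J ∩ (J + I_r(Θ))^t ≠ J·(J + I_r(Θ))^{t-1}; in particular the degree-t component of the Valabrega-Valla module VV_{J ⊆ J + I_r(Θ)} is nonzero. -/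
open MvPolynomial Finset

namespace VVAux

variable {K : Type} [Field K] {n : ℕ}

noncomputable def uF (s : Finset (Fin n)) : Fin n →₀ ℕ := ∑ i ∈ s, Finsupp.single i 1

lemma uF_apply (s : Finset (Fin n)) (a : Fin n) : uF s a = if a ∈ s then 1 else 0 := by
  classical
  simp only [uF, Finsupp.finset_sum_apply, Finsupp.single_apply]
  rw [Finset.sum_ite_eq' s a (fun _ => 1)]

lemma uF_insert {a : Fin n} {s : Finset (Fin n)} (ha : a ∉ s) :
    uF (insert a s) = Finsupp.single a 1 + uF s := by
  rw [uF, Finset.sum_insert ha]; rfl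

lemma prod_X_eq (s : Finset (Fin n)) :
    (∏ i ∈ s, (X i : MvPolynomial (Fin n) K)) = monomial (uF s) 1 := by
  classical
  induction s using Finset.induction_on with
  | empty => simp [uF]
  | @insert a s ha ih =>
      have hi : uF (insert a s) = Finsupp.single a 1 + uF s := by
        rw [uF, Finset.sum_insert ha]; rfl
      rw [Finset.prod_insert ha, ih, hi, X, monomial_mul, one_mul]

lemma uF_sub_single {s : Finset (Fin n)} {j : Fin n} (hj : j ∈ s) :
    uF s - Finsupp.single j 1 = uF (s.erase j) := by
  classical
  ext a
  rw [Finsupp.tsub_apply, uF_apply, uF_apply, Finsupp.single_apply]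
  by_cases h : a = j
  · subst h; simp [hj, Finset.mem_erase]
  · have h2 : ¬ j = a := fun hh => h hh.symm
    simp [h, h2, Finset.mem_erase]

lemma jac_apply (C : Set (Finset (Fin n))) (G : C) (j : Fin n) :
    clutterJacobian K C G j =
      if j ∈ (G : Finset (Fin n)) then monomial (uF ((G : Finset (Fin n)).erase j)) (1:K)
      else 0 := by
  classical
  show pderiv j (∏ i ∈ (G : Finset (Fin n)), (X i : MvPolynomial (Fin n) K)) = _
  rw [prod_X_eq, pderiv_monomial]
  by_cases h : j ∈ (G : Finset (Fin n))
  · rw [if_pos h]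
    have h1 : (uF (G : Finset (Fin n))) j = 1 := by rw [uF_apply, if_pos h]
    rw [h1, uF_sub_single h]
    norm_num
  · rw [if_neg h]
    have h1 : (uF (G : Finset (Fin n))) j = 0 := by rw [uF_apply, if_neg h]
    rw [h1]
    norm_num

lemma prod_monomial {ι : Type} (s : Finset ι) (u : ι → (Fin n →₀ ℕ)) :
    (∏ i ∈ s, (monomial (u i) (1:K))) = monomial (∑ i ∈ s, u i) 1 := by
  classical
  induction s using Finset.induction_on with
  | empty => simp
  | @insert a s ha ih => rw [Finset.prod_insert ha, ih, monomial_mul, one_mul, Finset.sum_insert ha]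

lemma det_diag_jac (C : Set (Finset (Fin n))) {r : ℕ} (R : Fin r → C) (c : Fin r → Fin n)
    (hmem : ∀ i, c i ∈ (R i : Finset (Fin n)))
    (hcross : ∀ i k, i ≠ k → c k ∉ (R i : Finset (Fin n))) :
    ((clutterJacobian K C).submatrix R c).det =
      monomial (∑ i, uF ((R i : Finset (Fin n)).erase (c i))) 1 := by
  classical
  have hd : (clutterJacobian K C).submatrix R c =
      Matrix.diagonal (fun i => monomial (uF ((R i : Finset (Fin n)).erase (c i))) (1:K)) := by
    ext i k
    rw [Matrix.submatrix_apply, jac_apply]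
    by_cases h : i = k
    · subst h; rw [if_pos (hmem i), Matrix.diagonal_apply_eq]
    · rw [if_neg (hcross i k h), Matrix.diagonal_apply_ne _ h]
  rw [hd, Matrix.det_diagonal, prod_monomial]

/-- weighted degree of an exponent vector -/
def wdeg (lam : Fin n → ℕ) (u : Fin n →₀ ℕ) : ℕ := u.sum fun a k => k * lam a

lemma wdeg_add (lam : Fin n → ℕ) (u v : Fin n →₀ ℕ) :
    wdeg lam (u + v) = wdeg lam u + wdeg lam v :=
  Finsupp.sum_add_index' (fun _ => zero_mul _) (fun _ _ _ => add_mul _ _ _)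

lemma wdeg_smul (lam : Fin n → ℕ) (k : ℕ) (u : Fin n →₀ ℕ) :
    wdeg lam (k • u) = k * wdeg lam u := by
  induction k with
  | zero => simp [wdeg]
  | succ k ih =>
      rw [succ_nsmul, wdeg_add, ih]
      ring

lemma wdeg_uF (lam : Fin n → ℕ) (s : Finset (Fin n)) :
    wdeg lam (uF s) = ∑ a ∈ s, lam a := by
  classical
  induction s using Finset.induction_on with
  | empty => simp [uF, wdeg]
  | @insert a s ha ih =>
      rw [Finset.sum_insert ha, ← ih, uF_insert ha, wdeg_add]
      congr 1
      unfold wdeg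
      rw [Finsupp.sum_single_index]
      · rw [one_mul]
      · exact zero_mul _

lemma wdeg_sum {ι : Type} (lam : Fin n → ℕ) (S : Finset ι) (u : ι → (Fin n →₀ ℕ)) :
    wdeg lam (∑ i ∈ S, u i) = ∑ i ∈ S, wdeg lam (u i) := by
  classical
  induction S using Finset.induction_on with
  | empty => simp [wdeg]
  | @insert a s ha ih => rw [Finset.sum_insert ha, Finset.sum_insert ha, wdeg_add, ih]

/-- the ideal of polynomials all of whose monomials have weighted degree ≥ k -/
def Vid (lam : Fin n → ℕ) (k : ℕ) : Ideal (MvPolynomial (Fin n) K) where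
  carrier := {f | ∀ u ∈ f.support, k ≤ wdeg lam u}
  zero_mem' := by simp
  add_mem' := by
    intro f g hf hg u hu
    rcases Finset.mem_union.mp (Finsupp.support_add hu) with h | h
    exacts [hf u h, hg u h]
  smul_mem' := by
    intro c f hf u hu
    rw [smul_eq_mul] at hu
    obtain ⟨a, ha, b, hb, rfl⟩ := Finset.mem_add.mp (MvPolynomial.support_mul _ _ hu)
    have := hf b hb
    rw [wdeg_add]
    omega

lemma mem_Vid {lam : Fin n → ℕ} {k : ℕ} {f : MvPolynomial (Fin n) K} :
    f ∈ Vid lam k ↔ ∀ u ∈ f.support, k ≤ wdeg lam u := Iff.rfl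

lemma Vid_antitone (lam : Fin n → ℕ) {k l : ℕ} (h : k ≤ l) :
    (Vid lam l : Ideal (MvPolynomial (Fin n) K)) ≤ Vid lam k := by
  intro f hf u hu
  exact le_trans h (hf u hu)

lemma mul_Vid (lam : Fin n → ℕ) (a b : ℕ) :
    (Vid lam a : Ideal (MvPolynomial (Fin n) K)) * Vid lam b ≤ Vid lam (a + b) := by
  rw [Ideal.mul_le]
  intro f hf g hg u hu
  obtain ⟨u1, h1, u2, h2, rfl⟩ := Finset.mem_add.mp (MvPolynomial.support_mul _ _ hu)
  rw [wdeg_add]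
  exact add_le_add (hf u1 h1) (hg u2 h2)

lemma pow_Vid (lam : Fin n → ℕ) (a s : ℕ) :
    (Vid lam a : Ideal (MvPolynomial (Fin n) K)) ^ s ≤ Vid lam (s * a) := by
  induction s with
  | zero => intro f _ u _; simp
  | succ s ih =>
      rw [pow_succ]
      calc (Vid lam a : Ideal (MvPolynomial (Fin n) K)) ^ s * Vid lam a
          ≤ Vid lam (s * a) * Vid lam a := Ideal.mul_mono_left ih
        _ ≤ Vid lam (s * a + a) := mul_Vid lam _ _
        _ = Vid lam ((s + 1) * a) := by ring_nf

lemma monomial_mem_Vid {lam : Fin n → ℕ} {k : ℕ} {u : Fin n →₀ ℕ} {c : K}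
    (h : k ≤ wdeg lam u) : monomial u c ∈ Vid lam k := by
  intro v hv
  classical
  rw [MvPolynomial.support_monomial] at hv
  split at hv
  · simp at hv
  · rw [Finset.mem_singleton] at hv; subst hv; exact h


end VVAux

namespace VVAux
variable {K : Type} [Field K] {n : ℕ}

/-- values of valid r-systems: distinct rows (circuits), distinct columns,
each column in its row -/
def SysVal (C : Set (Finset (Fin n))) (lam : Fin n → ℕ) (r : ℕ) : Set ℕ :=
  {k | ∃ (R : Fin r → C) (c : Fin r → Fin n), Function.Injective R ∧ Function.Injective c ∧
    (∀ i, c i ∈ (R i : Finset (Fin n))) ∧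
    k = ∑ i, ∑ a ∈ ((R i : Finset (Fin n)).erase (c i)), lam a}

lemma minors_le_Vid (C : Set (Finset (Fin n))) (lam : Fin n → ℕ) (r : ℕ) :
    minorsIdeal r (clutterJacobian K C) ≤ Vid lam (sInf (SysVal C lam r)) := by
  classical
  rw [minorsIdeal, Ideal.span_le]
  rintro p ⟨R, c, hR, hc, rfl⟩
  rw [Matrix.det_apply']
  apply Ideal.sum_mem
  intro σ _
  apply Ideal.mul_mem_left
  by_cases hall : ∀ i, c i ∈ ((R (σ i)) : Finset (Fin n))
  · have : (∏ i, ((clutterJacobian K C).submatrix R c) (σ i) i) =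
        monomial (∑ i, uF (((R (σ i)) : Finset (Fin n)).erase (c i))) (1:K) := by
      rw [← prod_monomial]
      apply Finset.prod_congr rfl
      intro i _
      rw [Matrix.submatrix_apply, jac_apply, if_pos (hall i)]
    rw [this]
    apply monomial_mem_Vid
    have hval : (∑ i, ∑ a ∈ (((R (σ i)) : Finset (Fin n)).erase (c i)), lam a)
        ∈ SysVal C lam r :=
      ⟨R ∘ σ, c, hR.comp σ.injective, hc, hall, rfl⟩
    calc sInf (SysVal C lam r) ≤ _ := Nat.sInf_le hval
      _ = wdeg lam (∑ i, uF (((R (σ i)) : Finset (Fin n)).erase (c i))) := by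
          rw [← Finset.sum_congr rfl (fun i _ => wdeg_uF lam _)]
          induction (Finset.univ : Finset (Fin r)) using Finset.induction_on with
          | empty => simp [wdeg]
          | @insert a s ha ih => rw [Finset.sum_insert ha, Finset.sum_insert ha, wdeg_add, ih]
  · push_neg at hall
    obtain ⟨i, hi⟩ := hall
    have hz : ((clutterJacobian K C).submatrix R c) (σ i) i = 0 := by
      rw [Matrix.submatrix_apply, jac_apply, if_neg hi]
    have hz2 : (∏ j, ((clutterJacobian K C).submatrix R c) (σ j) j) = 0 :=
      Finset.prod_eq_zero (Finset.mem_univ i) hz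
    rw [hz2]
    exact Ideal.zero_mem _
end VVAux

open VVAux

/-- Let `K` have characteristic zero, `C` a `d`-uniform clutter on
`[n]`, `J = I(C)` with Jacobian matrix `Θ`, `1 < t ≤ d`, `r ≥ 1`, and let
`y_1, …, y_m` (`m ≥ d`) be distinct vertices (here `y : Fin m → Fin n` injective, with
`y_1, …, y_t` the indices `j` with `j < t`, and `y_{t+1}, …, y_m` those with `t ≤ j`)
such that (i) `F = {y_1,…,y_d} ∈ C`; (ii) for every `(t-1)`-subset `B` of
`{y_1,…,y_t}`, the set `B ∪ {y_{t+1},…,y_m}` is independent (contains no circuit); and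
(iii) `α({y_{t+1},…,y_m}) = r - 1`.  Then
`J ∩ (J + I_r(Θ))^t ≠ J·(J + I_r(Θ))^{t-1}`; in particular the degree-`t` component of
the Valabrega–Valla module `VV_{J ⊆ J + I_r(Θ)}` is nonzero. -/
theorem VV_component_nonzero {K : Type} [Field K] [CharZero K] {n d : ℕ}
    (C : Set (Finset (Fin n))) (hC : ∀ F ∈ C, F.card = d)
    (t r m : ℕ) (ht1 : 1 < t) (htd : t ≤ d) (hr : 1 ≤ r) (hm : d ≤ m)
    (y : Fin m → Fin n) (hy : Function.Injective y)
    (hF : Finset.image (fun j : Fin d => y (Fin.castLE hm j)) Finset.univ ∈ C)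
    (hindep : ∀ B : Finset (Fin n),
      B ⊆ Finset.image y (Finset.univ.filter fun j : Fin m => (j : ℕ) < t) →
      B.card = t - 1 →
      ∀ F ∈ C, ¬ (F ⊆ B ∪ Finset.image y (Finset.univ.filter fun j : Fin m => t ≤ (j : ℕ))))
    (halpha : clutterAlpha C d
      ↑(Finset.image y (Finset.univ.filter fun j : Fin m => t ≤ (j : ℕ))) = r - 1) :
    facetIdeal K C ⊓ (facetIdeal K C + minorsIdeal r (clutterJacobian K C)) ^ t ≠
      facetIdeal K C * (facetIdeal K C + minorsIdeal r (clutterJacobian K C)) ^ (t - 1) := by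
  classical
  intro heq
  obtain ⟨r', rfl⟩ : ∃ r', r = r' + 1 := ⟨r - 1, by omega⟩
  set Hs : Finset (Fin n) :=
    Finset.image y (Finset.univ.filter fun j : Fin m => (j : ℕ) < t) with hHs
  set As : Finset (Fin n) :=
    Finset.image y (Finset.univ.filter fun j : Fin m => t ≤ (j : ℕ)) with hAs
  set Fc : Finset (Fin n) := Finset.image (fun j : Fin d => y (Fin.castLE hm j)) Finset.univ
    with hFc
  have hdisj : ∀ a : Fin n, a ∈ Hs → a ∈ As → False := by
    intro a ha hb
    rw [hHs, Finset.mem_image] at ha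
    rw [hAs, Finset.mem_image] at hb
    obtain ⟨j1, hj1, rfl⟩ := ha
    obtain ⟨j2, hj2, hj⟩ := hb
    simp only [Finset.mem_filter] at hj1 hj2
    have := hy hj
    omega
  have hHsub : Hs ⊆ Fc := by
    intro a ha
    rw [hHs, Finset.mem_image] at ha
    obtain ⟨j, hj, rfl⟩ := ha
    simp only [Finset.mem_filter, Finset.mem_univ, true_and] at hj
    rw [hFc, Finset.mem_image]
    exact ⟨⟨(j : ℕ), lt_of_lt_of_le hj htd⟩, Finset.mem_univ _, congrArg y (Fin.ext rfl)⟩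
  have hFsub : Fc ⊆ Hs ∪ As := by
    intro a ha
    rw [hFc, Finset.mem_image] at ha
    obtain ⟨i, _, rfl⟩ := ha
    by_cases h : ((Fin.castLE hm i : Fin m) : ℕ) < t
    · exact Finset.mem_union_left _ (by
        rw [hHs, Finset.mem_image]
        exact ⟨_, Finset.mem_filter.mpr ⟨Finset.mem_univ _, h⟩, rfl⟩)
    · exact Finset.mem_union_right _ (by
        rw [hAs, Finset.mem_image]
        exact ⟨_, Finset.mem_filter.mpr ⟨Finset.mem_univ _, by omega⟩, rfl⟩)
  have hcard : Hs.card = t := by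
    rw [hHs, Finset.card_image_of_injective _ hy]
    apply Finset.card_eq_of_bijective (fun i hi => ⟨i, lt_of_lt_of_le hi (le_trans htd hm)⟩)
    · intro a ha
      simp only [Finset.mem_filter, Finset.mem_univ, true_and] at ha
      exact ⟨(a : ℕ), ha, Fin.ext rfl⟩
    · intro i hi
      simp only [Finset.mem_filter, Finset.mem_univ, true_and]
      exact hi
    · intro i j hi hj h
      exact Fin.mk.inj_iff.mp h
  have hFC : Fc ∈ C := hF
  have hFact1 : ∀ G ∈ C, G ⊆ Hs ∪ As → Hs ⊆ G := by
    intro G hG hsub a haH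
    by_contra haG
    refine hindep (Hs.erase a) (Finset.erase_subset _ _) ?_ G hG ?_
    · rw [Finset.card_erase_of_mem haH, hcard]
    · intro x hx
      rcases Finset.mem_union.mp (hsub hx) with h | h
      · exact Finset.mem_union_left _ (Finset.mem_erase.mpr
          ⟨fun hxa => haG (hxa ▸ hx), h⟩)
      · exact Finset.mem_union_right _ h
  have hC1 : ∀ G ∈ C, ¬ (G ⊆ As) := by
    intro G hG hsub
    have hne : Hs.Nonempty := Finset.card_pos.mp (by omega)
    obtain ⟨a, ha⟩ := hne
    exact hdisj a ha (hsub (hFact1 G hG (fun x hx =>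
      Finset.mem_union_right _ (hsub hx)) ha))
  have hNbr : ∀ e : Finset (Fin n), e ⊆ As → ∀ v, insert v e ∈ C →
      v ∉ Hs ∧ v ∉ As ∧ v ∉ e := by
    intro e he v hv
    have hvA : v ∉ As := by
      intro hvA
      exact hC1 _ hv (Finset.insert_subset hvA he)
    have hvH : v ∉ Hs := by
      intro hvH
      have hsub : insert v e ⊆ Hs ∪ As :=
        Finset.insert_subset (Finset.mem_union_left _ hvH)
          (fun x hx => Finset.mem_union_right _ (he hx))
      obtain ⟨h', hh', hne⟩ := Finset.exists_mem_ne (by omega : 1 < Hs.card) v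
      rcases Finset.mem_insert.mp (hFact1 _ hv hsub hh') with h | h
      · exact hne h
      · exact hdisj h' hh' (he h)
    exact ⟨hvH, hvA, fun hve => hvA (he hve)⟩
  have hαle : ∀ E : Finset (Finset (Fin n)), E.Nonempty →
      (∀ e ∈ E, (↑e : Set (Fin n)) ⊆ (↑As : Set (Fin n)) ∧ e.card = d - 1 ∧ ∃ F ∈ C, e ⊂ F) →
      Set.ncard {v : Fin n | ∃ e ∈ E, insert v e ∈ C} ≤ r' := by
    intro E hne hprop
    have hmem : Set.ncard {v : Fin n | ∃ e ∈ E, insert v e ∈ C} ∈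
        {k : ℕ | ∃ E : Finset (Finset (Fin n)), E.Nonempty ∧
          (∀ e ∈ E, (↑e : Set (Fin n)) ⊆ (↑As : Set (Fin n)) ∧ e.card = d - 1 ∧ ∃ F ∈ C, e ⊂ F) ∧
          k = Set.ncard {v : Fin n | ∃ e ∈ E, insert v e ∈ C}} :=
      ⟨E, hne, hprop, rfl⟩
    have hbdd : BddAbove {k : ℕ | ∃ E : Finset (Finset (Fin n)), E.Nonempty ∧
          (∀ e ∈ E, (↑e : Set (Fin n)) ⊆ (↑As : Set (Fin n)) ∧ e.card = d - 1 ∧ ∃ F ∈ C, e ⊂ F) ∧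
          k = Set.ncard {v : Fin n | ∃ e ∈ E, insert v e ∈ C}} := by
      refine ⟨n, ?_⟩
      rintro k ⟨E, -, -, rfl⟩
      calc Set.ncard {v : Fin n | ∃ e ∈ E, insert v e ∈ C}
          ≤ Set.ncard (Set.univ : Set (Fin n)) :=
            Set.ncard_le_ncard (Set.subset_univ _) Set.finite_univ
        _ = n := by rw [Set.ncard_univ, Nat.card_eq_fintype_card, Fintype.card_fin]
    have := le_csSup hbdd hmem
    rw [show sSup {k : ℕ | ∃ E : Finset (Finset (Fin n)), E.Nonempty ∧
          (∀ e ∈ E, (↑e : Set (Fin n)) ⊆ (↑As : Set (Fin n)) ∧ e.card = d - 1 ∧ ∃ F ∈ C, e ⊂ F) ∧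
          k = Set.ncard {v : Fin n | ∃ e ∈ E, insert v e ∈ C}} = r' from ?_] at this
    · exact this
    · have := halpha
      rw [clutterAlpha] at this
      simpa using this
  -- boundary family (the alpha-achieving family)
  have hfam : ∃ (Bf : Fin r' → Finset (Fin n)) (jv : Fin r' → Fin n),
      Function.Injective jv ∧ (∀ k, Bf k ∈ C) ∧ (∀ k, jv k ∈ Bf k) ∧
      (∀ k, (Bf k).erase (jv k) ⊆ As) ∧ (∀ k, jv k ∉ Hs ∧ jv k ∉ As) := by
    rcases Nat.eq_zero_or_pos r' with h0 | hpos
    · subst h0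
      exact ⟨fun k => k.elim0, fun k => k.elim0, fun k => k.elim0, fun k => k.elim0,
        fun k => k.elim0, fun k => k.elim0, fun k => k.elim0⟩
    · have hsup : sSup {k : ℕ | ∃ E : Finset (Finset (Fin n)), E.Nonempty ∧
          (∀ e ∈ E, (↑e : Set (Fin n)) ⊆ (↑As : Set (Fin n)) ∧ e.card = d - 1 ∧
            ∃ F ∈ C, e ⊂ F) ∧
          k = Set.ncard {v : Fin n | ∃ e ∈ E, insert v e ∈ C}} = r' := by
        have := halpha; rw [clutterAlpha] at this; simpa using this
      have hbdd : BddAbove {k : ℕ | ∃ E : Finset (Finset (Fin n)), E.Nonempty ∧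
          (∀ e ∈ E, (↑e : Set (Fin n)) ⊆ (↑As : Set (Fin n)) ∧ e.card = d - 1 ∧
            ∃ F ∈ C, e ⊂ F) ∧
          k = Set.ncard {v : Fin n | ∃ e ∈ E, insert v e ∈ C}} := by
        refine ⟨n, ?_⟩
        rintro k ⟨E, -, -, rfl⟩
        calc Set.ncard {v : Fin n | ∃ e ∈ E, insert v e ∈ C}
            ≤ Set.ncard (Set.univ : Set (Fin n)) :=
              Set.ncard_le_ncard (Set.subset_univ _) Set.finite_univ
          _ = n := by rw [Set.ncard_univ, Nat.card_eq_fintype_card, Fintype.card_fin]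
      have hSne : {k : ℕ | ∃ E : Finset (Finset (Fin n)), E.Nonempty ∧
          (∀ e ∈ E, (↑e : Set (Fin n)) ⊆ (↑As : Set (Fin n)) ∧ e.card = d - 1 ∧
            ∃ F ∈ C, e ⊂ F) ∧
          k = Set.ncard {v : Fin n | ∃ e ∈ E, insert v e ∈ C}}.Nonempty := by
        by_contra hne
        rw [Set.not_nonempty_iff_eq_empty] at hne
        rw [hne] at hsup
        have : sSup (∅ : Set ℕ) = 0 := csSup_empty
        omega
      have hmem := Nat.sSup_mem hSne hbdd
      rw [hsup] at hmem
      obtain ⟨E, hEne, hEprop, hEcard⟩ := hmem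
      have hNSfin : {v : Fin n | ∃ e ∈ E, insert v e ∈ C}.Finite := Set.toFinite _
      have hcardNS : hNSfin.toFinset.card = r' := by
        rw [← Set.ncard_eq_toFinset_card _ hNSfin]; omega
      have eqv := Finset.equivFinOfCardEq hcardNS
      set jv : Fin r' → Fin n := fun k => ((eqv.symm k : hNSfin.toFinset) : Fin n) with hjv
      have hjvinj : Function.Injective jv := by
        intro a b h
        exact eqv.symm.injective (Subtype.ext h)
      have hjvNS : ∀ k, ∃ e ∈ E, insert (jv k) e ∈ C := by
        intro k
        have := (eqv.symm k).2
        rw [Set.Finite.mem_toFinset] at this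
        exact this
      choose ef hef1 hef2 using hjvNS
      have hefA : ∀ k, ef k ⊆ As := by
        intro k
        exact_mod_cast (hEprop _ (hef1 k)).1
      have hnbr := fun k => hNbr (ef k) (hefA k) (jv k) (hef2 k)
      refine ⟨fun k => insert (jv k) (ef k), jv, hjvinj, hef2, fun k => Finset.mem_insert_self _ _,
        ?_, fun k => ⟨(hnbr k).1, (hnbr k).2.1⟩⟩
      intro k
      rw [Finset.erase_insert (hnbr k).2.2]
      exact hefA k
  obtain ⟨Bf, jv, hjvinj, hBfC, hjvBf, hBfe, hjvout⟩ := hfam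
  -- the weight function
  set lam : Fin n → ℕ := fun a => if a ∈ Hs then 1 else if a ∈ As then 0 else t with hlam
  have hlamH : ∀ a ∈ Hs, lam a = 1 := fun a ha => by rw [hlam]; simp [ha]
  have hlamA : ∀ a ∈ As, lam a = 0 := fun a ha => by
    rw [hlam]
    simp only []
    rw [if_neg (fun h => hdisj a h ha), if_pos ha]
  have hlamO : ∀ a : Fin n, a ∉ Hs → a ∉ As → lam a = t := fun a h1 h2 => by
    rw [hlam]; simp [h1, h2]
  have hlam0 : ∀ a : Fin n, lam a = 0 → a ∈ As := by
    intro a h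
    by_cases h1 : a ∈ Hs
    · rw [hlamH a h1] at h; omega
    · by_cases h2 : a ∈ As
      · exact h2
      · rw [hlamO a h1 h2] at h; omega
  -- weight sums
  have hsumA : ∀ s : Finset (Fin n), s ⊆ As → ∑ a ∈ s, lam a = 0 := by
    intro s hs
    exact Finset.sum_eq_zero (fun a ha => hlamA a (hs ha))
  have hsumF : ∀ c₀ ∈ Hs, ∑ a ∈ Fc.erase c₀, lam a = t - 1 := by
    intro c₀ hc₀
    have h1 : ∑ a ∈ Fc.erase c₀, lam a = ∑ a ∈ Fc.erase c₀, (if a ∈ Hs then 1 else 0) := by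
      apply Finset.sum_congr rfl
      intro a ha
      by_cases h : a ∈ Hs
      · rw [hlamH a h, if_pos h]
      · rw [if_neg h]
        rcases Finset.mem_union.mp (hFsub (Finset.mem_of_mem_erase ha)) with h' | h'
        · exact absurd h' h
        · exact hlamA a h'
    rw [h1, Finset.sum_boole]
    have h2 : Finset.filter (fun a => a ∈ Hs) (Fc.erase c₀) = Hs.erase c₀ := by
      ext a
      simp only [Finset.mem_filter, Finset.mem_erase]
      constructor
      · rintro ⟨⟨hne, -⟩, hH⟩; exact ⟨hne, hH⟩
      · rintro ⟨hne, hH⟩; exact ⟨⟨hne, hHsub hH⟩, hH⟩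
    rw [h2]
    rw [Finset.card_erase_of_mem hc₀, hcard]
    simp
  have hwcirc : ∀ G ∈ C, t ≤ ∑ a ∈ G, lam a := by
    intro G hG
    by_cases hsub : G ⊆ Hs ∪ As
    · have h1 : Hs ⊆ G := hFact1 G hG hsub
      calc t = ∑ a ∈ Hs, lam a := by
              rw [Finset.sum_congr rfl (fun a ha => hlamH a ha)]
              simp [hcard]
        _ ≤ ∑ a ∈ G, lam a := Finset.sum_le_sum_of_subset h1
    · obtain ⟨a, haG, ha⟩ := Finset.not_subset.mp hsub
      have : lam a = t := hlamO a (fun h => ha (Finset.mem_union_left _ h))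
        (fun h => ha (Finset.mem_union_right _ h))
      calc t = lam a := this.symm
        _ ≤ ∑ a ∈ G, lam a := Finset.single_le_sum (fun _ _ => Nat.zero_le _) haG
  -- diagonal minors
  have hdiag : ∀ (R : Fin (r'+1) → C) (c : Fin (r'+1) → Fin n),
      (∀ i, c i ∈ (R i : Finset (Fin n))) →
      (∀ i k, i ≠ k → c k ∉ (R i : Finset (Fin n))) →
      ((monomial (∑ i, uF ((R i : Finset (Fin n)).erase (c i))) (1:K))
         ∈ minorsIdeal (r'+1) (clutterJacobian K C)) ∧
      (∑ i, ∑ a ∈ ((R i : Finset (Fin n)).erase (c i)), lam a) ∈ SysVal C lam (r'+1) := by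
    intro R c hmem hcross
    have hcinj : Function.Injective c := by
      intro i k h
      by_contra hik
      have hmk := hmem k
      rw [← h] at hmk
      exact hcross k i (fun hh => hik hh.symm) hmk
    have hRinj : Function.Injective R := by
      intro i k h
      by_contra hik
      exact hcross i k hik (by rw [h]; exact hmem k)
    constructor
    · rw [← det_diag_jac C R c hmem hcross]
      exact Ideal.subset_span ⟨R, c, hRinj, hcinj, rfl⟩
    · exact ⟨R, c, hRinj, hcinj, hmem, rfl⟩
  -- the delta minors
  have hδ : ∀ c₀ ∈ Hs, ∃ u : Fin n →₀ ℕ,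
      (monomial u (1:K)) ∈ minorsIdeal (r'+1) (clutterJacobian K C) ∧
      wdeg lam u = t - 1 ∧ (∀ a ∈ Fc.erase c₀, 1 ≤ u a) ∧
      (t - 1) ∈ SysVal C lam (r'+1) := by
    intro c₀ hc₀
    set Rδ : Fin (r'+1) → C := Fin.cons ⟨Fc, hFC⟩ (fun k => ⟨Bf k, hBfC k⟩) with hRδ
    set cδ : Fin (r'+1) → Fin n := Fin.cons c₀ jv with hcδ
    have hRδ0 : (Rδ 0 : Finset (Fin n)) = Fc := by rw [hRδ]; simp
    have hRδs : ∀ k, (Rδ k.succ : Finset (Fin n)) = Bf k := by intro k; rw [hRδ]; simp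
    have hcδ0 : cδ 0 = c₀ := by rw [hcδ]; simp
    have hcδs : ∀ k, cδ k.succ = jv k := by intro k; rw [hcδ]; simp
    have hmemδ : ∀ i, cδ i ∈ (Rδ i : Finset (Fin n)) := by
      intro i
      induction i using Fin.cases with
      | zero => rw [hRδ0, hcδ0]; exact hHsub hc₀
      | succ k => rw [hRδs, hcδs]; exact hjvBf k
    have hBfmem : ∀ l (x : Fin n), x ∈ Bf l → x ≠ jv l → x ∈ As := by
      intro l x hx hne
      exact hBfe l (Finset.mem_erase.mpr ⟨hne, hx⟩)
    have hcrossδ : ∀ i k, i ≠ k → cδ k ∉ (Rδ i : Finset (Fin n)) := by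
      intro i k hik
      induction i using Fin.cases with
      | zero =>
          induction k using Fin.cases with
          | zero => exact absurd rfl hik
          | succ l =>
              rw [hRδ0, hcδs]
              intro h
              rcases Finset.mem_union.mp (hFsub h) with h' | h'
              · exact (hjvout l).1 h'
              · exact (hjvout l).2 h'
      | succ l =>
          induction k using Fin.cases with
          | zero =>
              rw [hRδs, hcδ0]
              intro h
              have hne : c₀ ≠ jv l := fun hh => (hjvout l).1 (hh ▸ hc₀)
              exact hdisj c₀ hc₀ (hBfmem l c₀ h hne)
          | succ l' =>
              rw [hRδs, hcδs]
              intro h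
              have hll : l ≠ l' := fun hh => hik (by rw [hh])
              have hne : jv l' ≠ jv l := fun hh => hll (hjvinj hh).symm
              exact (hjvout l').2 (hBfmem l _ h hne)
    obtain ⟨hmon, hsv⟩ := hdiag Rδ cδ hmemδ hcrossδ
    have hval : (∑ i, ∑ a ∈ ((Rδ i : Finset (Fin n)).erase (cδ i)), lam a) = t - 1 := by
      rw [Fin.sum_univ_succ]
      have h0 : ∑ a ∈ ((Rδ 0 : Finset (Fin n)).erase (cδ 0)), lam a = t - 1 := by
        rw [hRδ0, hcδ0]; exact hsumF c₀ hc₀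
      have hs : ∀ k : Fin r', ∑ a ∈ ((Rδ k.succ : Finset (Fin n)).erase (cδ k.succ)), lam a = 0 := by
        intro k
        rw [hRδs, hcδs]
        exact hsumA _ (hBfe k)
      rw [h0, Finset.sum_congr rfl (fun k _ => hs k)]
      simp
    rw [hval] at hsv
    refine ⟨_, hmon, ?_, ?_, hsv⟩
    · rw [wdeg_sum]
      rw [Finset.sum_congr rfl (fun i _ => wdeg_uF lam _)]
      exact hval
    · intro a ha
      have h0 : uF ((Rδ 0 : Finset (Fin n)).erase (cδ 0)) a = 1 := by
        rw [hRδ0, hcδ0, uF_apply, if_pos ha]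
      have : (∑ i, uF ((Rδ i : Finset (Fin n)).erase (cδ i))) a
          = ∑ i, (uF ((Rδ i : Finset (Fin n)).erase (cδ i))) a := by
        rw [Finsupp.finset_sum_apply]
      rw [this]
      calc 1 = uF ((Rδ 0 : Finset (Fin n)).erase (cδ 0)) a := h0.symm
        _ ≤ _ := Finset.single_le_sum
            (f := fun i => uF ((Rδ i : Finset (Fin n)).erase (cδ i)) a)
            (fun _ _ => Nat.zero_le _) (Finset.mem_univ (0 : Fin (r'+1)))
  -- gamma
  obtain ⟨a₀, ha₀⟩ : Hs.Nonempty := Finset.card_pos.mp (by omega)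
  obtain ⟨u₀, hu₀I, hu₀w, hu₀ge, htSV⟩ := hδ a₀ ha₀
  set γ : ℕ := sInf (SysVal C lam (r'+1)) with hγ
  have hSVne : (SysVal C lam (r'+1)).Nonempty := ⟨t - 1, htSV⟩
  have hγle : γ ≤ t - 1 := Nat.sInf_le htSV
  -- every system has weight at least 1
  have hSV1 : ∀ k ∈ SysVal C lam (r'+1), 1 ≤ k := by
    rintro k ⟨R, c, hRinj, hcinj, hmem, rfl⟩
    by_contra hk
    push_neg at hk
    have hk0 : (∑ i, ∑ a ∈ ((R i : Finset (Fin n)).erase (c i)), lam a) = 0 := by omega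
    have hz := (Finset.sum_eq_zero_iff).mp hk0
    have hzA : ∀ i, ((R i : Finset (Fin n)).erase (c i)) ⊆ As := by
      intro i a ha
      have := (Finset.sum_eq_zero_iff).mp (hz i (Finset.mem_univ i)) a ha
      exact hlam0 a this
    have hcout : ∀ i, c i ∉ Hs ∧ c i ∉ As := by
      intro i
      have hins : insert (c i) ((R i : Finset (Fin n)).erase (c i)) = (R i : Finset (Fin n)) :=
        Finset.insert_erase (hmem i)
      constructor
      · intro hH
        have hsub : (R i : Finset (Fin n)) ⊆ Hs ∪ As := by
          rw [← hins]
          exact Finset.insert_subset (Finset.mem_union_left _ hH)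
            (fun x hx => Finset.mem_union_right _ (hzA i hx))
        have hHR := hFact1 _ (R i).2 hsub
        obtain ⟨h', hh', hne⟩ := Finset.exists_mem_ne (by omega : 1 < Hs.card) (c i)
        have : h' ∈ (R i : Finset (Fin n)).erase (c i) :=
          Finset.mem_erase.mpr ⟨hne, hHR hh'⟩
        exact hdisj h' hh' (hzA i this)
      · intro hA
        have hsub : (R i : Finset (Fin n)) ⊆ As := by
          rw [← hins]
          exact Finset.insert_subset hA (hzA i)
        exact hC1 _ (R i).2 hsub
    -- contradiction with alpha
    set E : Finset (Finset (Fin n)) :=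
      Finset.image (fun i => (R i : Finset (Fin n)).erase (c i)) Finset.univ with hE
    have hEne : E.Nonempty := ⟨_, Finset.mem_image_of_mem _ (Finset.mem_univ 0)⟩
    have hEprop : ∀ e ∈ E, (↑e : Set (Fin n)) ⊆ (↑As : Set (Fin n)) ∧ e.card = d - 1 ∧
        ∃ F ∈ C, e ⊂ F := by
      intro e he
      rw [hE, Finset.mem_image] at he
      obtain ⟨i, -, rfl⟩ := he
      refine ⟨?_, ?_, ⟨R i, (R i).2, Finset.erase_ssubset (hmem i)⟩⟩
      · exact_mod_cast hzA i
      · rw [Finset.card_erase_of_mem (hmem i), hC _ (R i).2]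
    have hsubN : (↑(Finset.image c Finset.univ) : Set (Fin n)) ⊆
        {v : Fin n | ∃ e ∈ E, insert v e ∈ C} := by
      intro v hv
      rw [Finset.coe_image] at hv
      obtain ⟨i, -, rfl⟩ := hv
      refine ⟨(R i : Finset (Fin n)).erase (c i), Finset.mem_image_of_mem _ (Finset.mem_univ i), ?_⟩
      rw [Finset.insert_erase (hmem i)]
      exact (R i).2
    have hge : r' + 1 ≤ Set.ncard {v : Fin n | ∃ e ∈ E, insert v e ∈ C} := by
      calc r' + 1 = (Finset.image c Finset.univ).card := by
            rw [Finset.card_image_of_injective _ hcinj, Finset.card_univ, Fintype.card_fin]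
        _ = Set.ncard (↑(Finset.image c Finset.univ) : Set (Fin n)) :=
            (Set.ncard_coe_finset _).symm
        _ ≤ _ := Set.ncard_le_ncard hsubN (Set.toFinite _)
    have := hαle E hEne hEprop
    omega
  have hγ1 : 1 ≤ γ := hSV1 _ (Nat.sInf_mem hSVne)
  -- an achieving monomial minor with a head variable in its support
  have hν : ∃ us : Fin n →₀ ℕ,
      (monomial us (1:K)) ∈ minorsIdeal (r'+1) (clutterJacobian K C) ∧
      wdeg lam us = γ ∧ ∃ ys ∈ Hs, 1 ≤ us ys := by
    obtain ⟨R, c, hRinj, hcinj, hmem, hval⟩ := Nat.sInf_mem hSVne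
    rw [← hγ] at hval
    by_cases hinner : ∃ i : Fin (r'+1), (R i : Finset (Fin n)) ⊆ Hs ∪ As
    · -- gamma = t-1, use the delta minor u₀
      obtain ⟨i, hi⟩ := hinner
      have hHR : Hs ⊆ (R i : Finset (Fin n)) := hFact1 _ (R i).2 hi
      have hlow : t - 1 ≤ ∑ a ∈ ((R i : Finset (Fin n)).erase (c i)), lam a := by
        calc t - 1 ≤ (Hs.erase (c i)).card := by
              have := Finset.pred_card_le_card_erase (s := Hs) (a := c i)
              omega
          _ = ∑ a ∈ Hs.erase (c i), lam a := by
              rw [Finset.sum_congr rfl (fun a ha => hlamH a (Finset.mem_of_mem_erase ha))]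
              simp
          _ ≤ _ := Finset.sum_le_sum_of_subset (Finset.erase_subset_erase _ hHR)
      have hγt : γ = t - 1 := by
        have : t - 1 ≤ γ := by
          rw [hval]
          calc t - 1 ≤ _ := hlow
            _ ≤ _ := Finset.single_le_sum
                (f := fun i => ∑ a ∈ ((R i : Finset (Fin n)).erase (c i)), lam a)
                (fun _ _ => Nat.zero_le _) (Finset.mem_univ i)
        omega
      obtain ⟨ys, hysH, hysne⟩ := Finset.exists_mem_ne (by omega : 1 < Hs.card) a₀
      refine ⟨u₀, hu₀I, by rw [hu₀w, hγt], ys, hysH, ?_⟩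
      exact hu₀ge ys (Finset.mem_erase.mpr ⟨hysne, hHsub hysH⟩)
    · push_neg at hinner
      have houts : ∀ i, ((R i : Finset (Fin n)).erase (c i)) ⊆ Hs ∪ As := by
        by_contra h
        push_neg at h
        obtain ⟨i, hns⟩ := h
        obtain ⟨a, ha, hout⟩ := Finset.not_subset.mp (fun hh => hns hh)
        have h1 : lam a = t := hlamO a (fun hh => hout (Finset.mem_union_left _ hh))
          (fun hh => hout (Finset.mem_union_right _ hh))
        have h2 : t ≤ γ := by
          rw [hval]
          calc t = lam a := h1.symm
            _ ≤ ∑ a ∈ ((R i : Finset (Fin n)).erase (c i)), lam a :=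
                Finset.single_le_sum (fun _ _ => Nat.zero_le _) ha
            _ ≤ _ := Finset.single_le_sum
                (f := fun i => ∑ a ∈ ((R i : Finset (Fin n)).erase (c i)), lam a)
                (fun _ _ => Nat.zero_le _) (Finset.mem_univ i)
        omega
      have hcnot : ∀ i, c i ∉ Hs ∪ As := by
        intro i
        obtain ⟨a, haR, hout⟩ := Finset.not_subset.mp (hinner i)
        have : a = c i := by
          by_contra hne
          exact hout (houts i (Finset.mem_erase.mpr ⟨hne, haR⟩))
        rw [← this]
        exact hout
      have hcross : ∀ i k, i ≠ k → c k ∉ (R i : Finset (Fin n)) := by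
        intro i k hik h
        have hne : c k ≠ c i := fun hh => hik (hcinj hh).symm
        exact hcnot k (houts i (Finset.mem_erase.mpr ⟨hne, h⟩))
      obtain ⟨hmon, -⟩ := hdiag R c hmem hcross
      have hw : wdeg lam (∑ i, uF ((R i : Finset (Fin n)).erase (c i))) = γ := by
        rw [wdeg_sum, Finset.sum_congr rfl (fun i _ => wdeg_uF lam _)]
        exact hval.symm
      -- find a head variable in the support
      have hex : ∃ i, ∃ a ∈ ((R i : Finset (Fin n)).erase (c i)), lam a ≠ 0 := by
        by_contra h
        push_neg at h
        have : (∑ i, ∑ a ∈ ((R i : Finset (Fin n)).erase (c i)), lam a) = 0 :=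
          Finset.sum_eq_zero (fun i _ => Finset.sum_eq_zero (fun a ha => h i a ha))
        omega
      obtain ⟨i, a, ha, hane⟩ := hex
      have haH : a ∈ Hs := by
        rcases Finset.mem_union.mp (houts i ha) with h | h
        · exact h
        · exact absurd (hlamA a h) hane
      refine ⟨_, hmon, hw, a, haH, ?_⟩
      have h0 : uF ((R i : Finset (Fin n)).erase (c i)) a = 1 := by
        rw [uF_apply, if_pos ha]
      have happ : (∑ i, uF ((R i : Finset (Fin n)).erase (c i))) a
          = ∑ i, (uF ((R i : Finset (Fin n)).erase (c i))) a := by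
        rw [Finsupp.finset_sum_apply]
      rw [happ]
      calc 1 = uF ((R i : Finset (Fin n)).erase (c i)) a := h0.symm
        _ ≤ _ := Finset.single_le_sum
            (f := fun k => uF ((R k : Finset (Fin n)).erase (c k)) a)
            (fun _ _ => Nat.zero_le _) (Finset.mem_univ i)
  -- assemble the witness
  obtain ⟨us, husI, husw, ys, hysH, hysu⟩ := hν
  obtain ⟨uδ, hδI, hδw, hδge, -⟩ := hδ ys hysH
  set uw : Fin n →₀ ℕ := uδ + (t-1) • us with huw
  have hwmul : (monomial uw (1:K)) = monomial uδ 1 * (monomial us 1)^(t-1) := by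
    rw [monomial_pow, monomial_mul, one_pow, one_mul]
  have hwI : (monomial uw (1:K)) ∈ (minorsIdeal (r'+1) (clutterJacobian K C))^t := by
    have ht' : t - 1 + 1 = t := by omega
    have h1 : (monomial us (1:K))^(t-1) ∈ (minorsIdeal (r'+1) (clutterJacobian K C))^(t-1) :=
      Ideal.pow_mem_pow husI _
    have h2 := Ideal.mul_mem_mul hδI h1
    rw [← pow_succ'] at h2
    rw [ht'] at h2
    rw [hwmul]
    exact h2
  have hwLt : (monomial uw (1:K)) ∈
      (facetIdeal K C + minorsIdeal (r'+1) (clutterJacobian K C))^t :=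
    Ideal.pow_right_mono le_sup_right t hwI
  have hwJ : (monomial uw (1:K)) ∈ facetIdeal K C := by
    have hle : uF Fc ≤ uw := by
      rw [Finsupp.le_def]
      intro a
      by_cases haF : a ∈ Fc
      · rw [uF_apply, if_pos haF, huw, Finsupp.add_apply, Finsupp.smul_apply, smul_eq_mul]
        by_cases hays : a = ys
        · subst hays
          have h1t : 1 ≤ t - 1 := by omega
          have h11 : 1 * 1 ≤ (t-1) * us a := Nat.mul_le_mul h1t hysu
          omega
        · have : 1 ≤ uδ a := hδge a (Finset.mem_erase.mpr ⟨hays, haF⟩)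
          omega
      · rw [uF_apply, if_neg haF]
        exact Nat.zero_le _
    have heq2 : (monomial uw (1:K)) = monomial (uw - uF Fc) 1 * (∏ i ∈ Fc, X i) := by
      rw [prod_X_eq, monomial_mul, one_mul, tsub_add_cancel_of_le hle]
    rw [heq2]
    exact Ideal.mul_mem_left _ _ (Ideal.subset_span ⟨Fc, hFC, rfl⟩)
  -- the weight bound on the right-hand side
  have hJV : facetIdeal K C ≤ Vid lam t := by
    rw [facetIdeal, Ideal.span_le]
    rintro p ⟨G, hG, rfl⟩
    rw [SetLike.mem_coe, prod_X_eq]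
    exact monomial_mem_Vid (by rw [wdeg_uF]; exact hwcirc G hG)
  have hIV : minorsIdeal (r'+1) (clutterJacobian K C) ≤ Vid lam γ := by
    rw [hγ]
    exact minors_le_Vid C lam (r'+1)
  have hLV : facetIdeal K C + minorsIdeal (r'+1) (clutterJacobian K C) ≤ Vid lam γ :=
    sup_le (le_trans hJV (Vid_antitone lam (by omega))) hIV
  have hRHS : facetIdeal K C * (facetIdeal K C + minorsIdeal (r'+1) (clutterJacobian K C))^(t-1)
      ≤ Vid lam (t + (t-1)*γ) := by
    calc facetIdeal K C * (facetIdeal K C + minorsIdeal (r'+1) (clutterJacobian K C))^(t-1)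
        ≤ Vid lam t * (Vid lam γ)^(t-1) :=
          Ideal.mul_mono hJV (Ideal.pow_right_mono hLV (t-1))
      _ ≤ Vid lam t * Vid lam ((t-1)*γ) := Ideal.mul_mono_right (pow_Vid lam γ (t-1))
      _ ≤ Vid lam (t + (t-1)*γ) := mul_Vid lam t _
  -- the contradiction
  have hwLHS : (monomial uw (1:K)) ∈ facetIdeal K C ⊓
      (facetIdeal K C + minorsIdeal (r'+1) (clutterJacobian K C))^t :=
    Submodule.mem_inf.mpr ⟨hwJ, hwLt⟩
  rw [heq] at hwLHS
  have hbd := hRHS hwLHS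
  have hsupp : uw ∈ (monomial uw (1:K)).support := by
    rw [MvPolynomial.support_monomial, if_neg (one_ne_zero)]
    exact Finset.mem_singleton_self _
  have hineq := hbd uw hsupp
  have hcomp : wdeg lam uw = (t-1) + (t-1)*γ := by
    rw [huw, wdeg_add, wdeg_smul, hδw, husw]
  rw [hcomp] at hineq
  omega
end

section
/- Let K be a field of characteristic zero, n ≥ 3, R = K[x_1,...,x_n], and J = (x_i x_j : 1 ≤ i < j ≤ n) the ideal generated by all squarefree monomials of degree 2. Let Θ be the Jacobian matrix of the minimal monomial generators of J. Then the ideal I_{n-1}(Θ) of (n-1)×(n-1) minors of Θ equals m^{n-1}, where m = (x_1,...,x_n). -/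
open MvPolynomial Pointwise

lemma spanPowSet {R : Type*} [CommRing R] (s : Set R) (k : ℕ) :
    Ideal.span s ^ k = Ideal.span (s ^ k) := by
  induction k with
  | zero => simp [Ideal.one_eq_top, ← Set.singleton_one]
  | succ k ih => rw [pow_succ, ih, Ideal.span_mul_span', pow_succ]

section Key

variable {K : Type} [Field K] {n : ℕ}

/-- Entry formula for the Jacobian matrix. -/
lemma jac_entry (u v k : Fin n) :
    MvPolynomial.pderiv k (MvPolynomial.X u * MvPolynomial.X v : MvPolynomial (Fin n) K)
      = (if k = u then X v else 0) + (if k = v then X u else 0) := by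
  rw [pderiv_mul, pderiv_X, pderiv_X, Pi.single_apply, Pi.single_apply]
  split_ifs <;> subst_vars <;> simp_all [mul_comm]

lemma prod_X_mem_minors (hn : 3 ≤ n) (a : Fin (n - 1) → Fin n) :
    (∏ j, MvPolynomial.X (a j) : MvPolynomial (Fin n) K) ∈
      minorsIdeal (n - 1)
        (Matrix.of fun (p : {p : Fin n × Fin n // p.1 < p.2}) (k : Fin n) =>
          MvPolynomial.pderiv k
            (MvPolynomial.X p.1.1 * MvPolynomial.X p.1.2 : MvPolynomial (Fin n) K)) := by
  classical
  set M := (Matrix.of fun (p : {p : Fin n × Fin n // p.1 < p.2}) (k : Fin n) =>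
          MvPolynomial.pderiv k
            (MvPolynomial.X p.1.1 * MvPolynomial.X p.1.2 : MvPolynomial (Fin n) K)) with hM
  -- multiplicity of each variable
  set mult : Fin n → ℕ := fun v => (Finset.univ.filter fun j => a j = v).card with hmult
  have hmult_le : ∀ v, mult v ≤ n := fun v =>
    le_trans (Finset.card_filter_le _ _) (by simp)
  -- sort the vertices by decreasing multiplicity
  set σ : Equiv.Perm (Fin n) := Tuple.sort (fun v => n - mult v) with hσ
  have hσmono : ∀ q r : Fin n, q ≤ r → mult (σ r) ≤ mult (σ q) := by
    intro q r hqr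
    have := Tuple.monotone_sort (fun v => n - mult v) hqr
    simp only [Function.comp_apply] at this
    rw [← hσ] at this
    have h1 := hmult_le (σ q)
    have h2 := hmult_le (σ r)
    omega
  -- sort the factors by increasing rank of their variable
  set π : Equiv.Perm (Fin (n - 1)) := Tuple.sort (fun i => σ.symm (a i)) with hπ
  set t : Fin (n - 1) → Fin n := fun i => σ.symm (a (π i)) with htdef
  have htmono : Monotone t := Tuple.monotone_sort (fun i => σ.symm (a i))
  -- the key counting estimate
  have hti : ∀ i : Fin (n - 1), (t i : ℕ) ≤ (i : ℕ) := by
    intro i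
    by_contra hcon
    push_neg at hcon
    set r : Fin n := t i with hr
    -- the set of factors whose variable has small rank
    set S : Finset (Fin (n - 1)) := Finset.univ.filter (fun j => σ.symm (a j) < r) with hS
    set S' : Finset (Fin (n - 1)) := Finset.univ.filter (fun j => t j < r) with hS'
    have hcard : S'.card = S.card := by
      apply Finset.card_bij (fun j _ => π j)
      · intro j hj
        simp only [hS', Finset.mem_filter, Finset.mem_univ, true_and] at hj
        simp only [hS, Finset.mem_filter, Finset.mem_univ, true_and]
        exact hj
      · intro j _ j' _ h
        exact π.injective h
      · intro j hj
        refine ⟨π.symm j, ?_, by simp⟩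
        simp only [hS, Finset.mem_filter, Finset.mem_univ, true_and] at hj
        simp only [hS', Finset.mem_filter, Finset.mem_univ, true_and, htdef,
          Equiv.apply_symm_apply]
        exact hj
    -- S' is an initial segment avoiding i
    have hS'sub : S' ⊆ Finset.Iio i := by
      intro j hj
      simp only [hS', Finset.mem_filter, Finset.mem_univ, true_and] at hj
      simp only [Finset.mem_Iio]
      by_contra hij
      push_neg at hij
      exact absurd (lt_of_le_of_lt (htmono hij) hj) (lt_irrefl r)
    have hcard1 : S'.card ≤ (i : ℕ) := by
      calc S'.card ≤ (Finset.Iio i).card := Finset.card_le_card hS'sub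
        _ = (i : ℕ) := Fin.card_Iio i
    -- lower bound on S.card
    have hfiber : S.card = ∑ q ∈ Finset.Iio r, (S.filter fun j => σ.symm (a j) = q).card := by
      apply Finset.card_eq_sum_card_fiberwise
      intro j hj
      simp only [hS, Finset.mem_filter, Finset.mem_univ, true_and] at hj
      simpa using hj
    have hfiber_ge : ∀ q ∈ Finset.Iio r, 1 ≤ (S.filter fun j => σ.symm (a j) = q).card := by
      intro q hq
      simp only [Finset.mem_Iio] at hq
      -- the fiber has cardinality mult (σ q) ≥ mult (σ r) ≥ 1
      have hfe : (S.filter fun j => σ.symm (a j) = q) =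
          Finset.univ.filter (fun j => a j = σ q) := by
        ext j
        simp only [hS, Finset.mem_filter, Finset.mem_univ, true_and]
        constructor
        · rintro ⟨-, h⟩
          rw [← h]; simp
        · intro h
          have : σ.symm (a j) = q := by rw [h]; simp
          exact ⟨this ▸ hq, this⟩
      rw [hfe]
      have h1 : mult (σ r) ≤ mult (σ q) := hσmono q r (le_of_lt hq)
      have h2 : 1 ≤ mult (σ r) := by
        rw [hmult]
        refine Finset.card_pos.mpr ⟨π i, ?_⟩
        simp only [Finset.mem_filter, Finset.mem_univ, true_and]
        have : σ.symm (a (π i)) = r := rfl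
        rw [← this, Equiv.apply_symm_apply]
      calc 1 ≤ mult (σ q) := le_trans h2 h1
        _ = _ := rfl
    have hcard2 : (r : ℕ) ≤ S.card := by
      calc (r : ℕ) = (Finset.Iio r).card := (Fin.card_Iio r).symm
        _ = ∑ q ∈ Finset.Iio r, 1 := by simp
        _ ≤ ∑ q ∈ Finset.Iio r, (S.filter fun j => σ.symm (a j) = q).card :=
            Finset.sum_le_sum hfiber_ge
        _ = S.card := hfiber.symm
    omega
  -- set up columns and rows
  have hcast : n - 1 + 1 = n := by omega
  set γ : Fin (n - 1) → Fin n := fun i => σ (Fin.cast hcast i.succ) with hγ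
  have hγval : ∀ i, (σ.symm (γ i) : ℕ) = (i : ℕ) + 1 := by
    intro i; simp [hγ]
  have hγinj : Function.Injective γ := by
    intro i j h
    have h1 := hγval i
    have h2 := hγval j
    rw [h] at h1
    have : (i : ℕ) = (j : ℕ) := by omega
    exact Fin.ext this
  set u : Fin (n - 1) → Fin n := fun i => a (π i) with hu
  have hut : ∀ i, σ.symm (u i) = t i := fun i => rfl
  have hne : ∀ i, u i ≠ γ i := by
    intro i h
    have h1 := hγval i
    have h2 := hti i
    rw [← h] at h1
    rw [hut] at h1
    omega
  have hγu : ∀ i j, γ j = u i → (j : ℕ) + 1 ≤ (i : ℕ) := by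
    intro i j h
    have h1 := hγval j
    rw [h, hut] at h1
    have h2 := hti i
    omega
  set ρ : Fin (n - 1) → {p : Fin n × Fin n // p.1 < p.2} := fun i =>
    if h : u i < γ i then ⟨(u i, γ i), h⟩
    else ⟨(γ i, u i), ((hne i).lt_or_gt.resolve_left h)⟩ with hρ
  have hρval : ∀ i k, M (ρ i) k =
      (if k = u i then X (γ i) else 0) + (if k = γ i then X (u i) else 0) := by
    intro i k
    by_cases h : u i < γ i
    · simp only [hρ, dif_pos h, hM, Matrix.of_apply]
      exact jac_entry _ _ _
    · simp only [hρ, dif_neg h, hM, Matrix.of_apply]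
      rw [jac_entry]
      ring
  have hρinj : Function.Injective ρ := by
    intro i j h
    have hpair : (ρ i).1 = (ρ j).1 := congrArg Subtype.val h
    by_cases hi : u i < γ i <;> by_cases hj : u j < γ j <;>
      simp only [hρ, dif_pos, dif_neg, hi, hj] at hpair <;>
      rw [Prod.mk.injEq] at hpair
    · exact hγinj (hpair.2)
    · -- (u i, γ i) = (γ j, u j)
      have h1 := hγu i j hpair.1.symm
      have h2 := hγu j i hpair.2
      omega
    · have h1 := hγu j i hpair.1
      have h2 := hγu i j hpair.2.symm
      omega
    · exact hγinj (hpair.1)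
  -- the submatrix is lower triangular
  set N := M.submatrix ρ γ with hN
  have htri : N.BlockTriangular OrderDual.toDual := by
    intro i j hij
    simp only [OrderDual.toDual_lt_toDual] at hij
    rw [hN, Matrix.submatrix_apply, hρval]
    rw [if_neg, if_neg, add_zero]
    · intro h; exact absurd (hγinj h) (ne_of_gt hij)
    · intro h
      have := hγu i j h
      have : (j : ℕ) < (i : ℕ) := by omega
      exact absurd hij (not_lt.mpr (le_of_lt (by exact_mod_cast this)))
  have hdet : N.det = ∏ j, MvPolynomial.X (a j) := by
    rw [Matrix.det_of_lowerTriangular N htri]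
    have : ∀ i, N i i = MvPolynomial.X (u i) := by
      intro i
      rw [hN, Matrix.submatrix_apply, hρval]
      rw [if_neg (fun h => hne i h.symm), if_pos rfl, zero_add]
    rw [Finset.prod_congr rfl (fun i _ => this i)]
    exact Equiv.prod_comp π (fun j => MvPolynomial.X (a j))
  exact Ideal.subset_span ⟨ρ, γ, hρinj, hγinj, hdet.symm⟩

end Key

/-- Let `n ≥ 3`, `R = K[x_1,…,x_n]` and
`J = (x_i x_j : 1 ≤ i < j ≤ n)`.  The minimal monomial generators of `J` are the
monomials `x_i x_j`, `i < j`, so the Jacobian matrix `Θ` of the minimal generators has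
rows indexed by the pairs `i < j`, with `(⟨i,j⟩, k)` entry `∂(x_i x_j)/∂x_k`.  Then
`I_{n-1}(Θ) = m^{n-1}`, where `m = (x_1,…,x_n)`. -/
theorem minors_jacobian_sqfree_deg2 {K : Type} [Field K] {n : ℕ} (hn : 3 ≤ n) :
    minorsIdeal (n - 1)
        (Matrix.of fun (p : {p : Fin n × Fin n // p.1 < p.2}) (k : Fin n) =>
          MvPolynomial.pderiv k
            (MvPolynomial.X p.1.1 * MvPolynomial.X p.1.2 : MvPolynomial (Fin n) K)) =
      (Ideal.span (Set.range (MvPolynomial.X : Fin n → MvPolynomial (Fin n) K))) ^ (n - 1) := by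
  classical
  apply le_antisymm
  · simp only [minorsIdeal]
    apply Ideal.span_le.mpr
    rintro p ⟨ρ, γ, -, -, rfl⟩
    simp only [SetLike.mem_coe]
    rw [Matrix.det_apply]
    apply Ideal.sum_mem
    intro c _
    rw [Units.smul_def, zsmul_eq_mul]
    apply Ideal.mul_mem_left
    have hpow : ((Ideal.span (Set.range (MvPolynomial.X : Fin n → MvPolynomial (Fin n) K))) ^
        (n - 1)) = ∏ _i : Fin (n - 1), Ideal.span (Set.range MvPolynomial.X) := by
      rw [Finset.prod_const, Finset.card_univ, Fintype.card_fin]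
    rw [hpow]
    apply Ideal.prod_mem_prod
    intro i _
    rw [Matrix.submatrix_apply, Matrix.of_apply, jac_entry]
    apply Ideal.add_mem <;> split_ifs <;>
      first
        | exact Ideal.subset_span ⟨_, rfl⟩
        | exact (Ideal.span _).zero_mem
  · rw [spanPowSet]
    apply Ideal.span_le.mpr
    intro p hp
    rw [Set.mem_pow] at hp
    obtain ⟨f, hf⟩ := hp
    have hex : ∀ i, ∃ v, MvPolynomial.X v = (f i : MvPolynomial (Fin n) K) := fun i => (f i).2
    choose a ha using hex
    have hp' : p = ∏ j, MvPolynomial.X (a j) := by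
      rw [← hf, List.prod_ofFn]
      exact (Finset.prod_congr rfl (fun j _ => (ha j))).symm
    rw [SetLike.mem_coe, hp']
    exact prod_X_mem_minors hn a
end
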